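/- arXiv:2312.03536 — 5 statements merged into one kernel-verified Lean document; each statement's English description precedes it below -/
import Mathlib

section
/- In a dynamic ordinal game in reduced form satisfying the replacement property, fix a restriction R, a player i ∈ I, and a strategy s*_i ∈ R_i, and assume that for every h ∈ H_i(s*_i) with R^i(h) nonempty, s*_i is not weakly dominated relative to R^i(h) by any strategy in R_i(h). Then there exist a function u : Z(R) → ℝ originating from ≿_i and a conditional probability system μ_i ∈ Δ^{H_i}(S_{-i}) with supp μ_i(·|S_{-i}(h)) = R_{-i}(h) for every h ∈ H_i(s*_i) with R^i(h) nonempty, such that for every h ∈ H_i(s*_i) with R^i(h) nonempty and every s_i ∈ R_i(h): Σ_{s_{-i}∈R_{-i}} u(ζ(s*_i,s_{-i}))·μ_i({s_{-i}}|S_{-i}(h)) ≥ Σ_{s_{-i}∈R_{-i}} u(ζ(s_i,s_{-i}))·μ_i({s_{-i}}|S_{-i}(h)). -/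
open scoped Classical

namespace ICBDAux

variable {α : Type} [Fintype α]

noncomputable def dotp (x y : α → ℝ) : ℝ := ∑ a, x a * y a

lemma dotp_sub_smul_right (x v w : α → ℝ) (c : ℝ) :
    dotp x (fun t => v t - c * w t) = dotp x v - c * dotp x w := by
  unfold dotp
  rw [Finset.mul_sum, ← Finset.sum_sub_distrib]
  exact Finset.sum_congr rfl (fun a _ => by ring)

lemma dotp_sub_smul_left (x y v : α → ℝ) (c : ℝ) :
    dotp (fun t => x t - c * y t) v = dotp x v - c * dotp y v := by
  unfold dotp
  rw [Finset.mul_sum, ← Finset.sum_sub_distrib]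
  exact Finset.sum_congr rfl (fun a _ => by ring)

lemma dotp_self_pos {x : α → ℝ} (hx : ∃ a, x a ≠ 0) : 0 < dotp x x := by
  obtain ⟨a, ha⟩ := hx
  exact Finset.sum_pos' (fun b _ => mul_self_nonneg _) ⟨a, Finset.mem_univ a, mul_self_pos.2 ha⟩

def InConeF {k : ℕ} (g : Fin k → α → ℝ) (b : α → ℝ) : Prop :=
  ∃ y : Fin k → ℝ, (∀ i, 0 ≤ y i) ∧ ∀ t, b t = ∑ i, y i * g i t

theorem farkasF : ∀ {k : ℕ} (g : Fin k → α → ℝ) (b : α → ℝ), ¬ InConeF g b →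
    ∃ y : α → ℝ, (∀ i, dotp y (g i) ≤ 0) ∧ 0 < dotp y b := by
  intro k
  induction k with
  | zero =>
    intro g b hb
    have hbne : ∃ a, b a ≠ 0 := by
      by_contra hall
      push_neg at hall
      exact hb ⟨fun i => i.elim0, fun i => i.elim0, fun t => by simp [hall t]⟩
    exact ⟨b, fun i => i.elim0, dotp_self_pos hbne⟩
  | succ k IH =>
    intro g b hb
    have htl : ¬ InConeF (fun i : Fin k => g i.succ) b := by
      rintro ⟨y, hy0, hyrep⟩
      refine hb ⟨Fin.cons 0 y, ?_, ?_⟩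
      · intro i
        refine Fin.cases ?_ ?_ i
        · rw [Fin.cons_zero]
        · intro j; rw [Fin.cons_succ]; exact hy0 j
      · intro t
        rw [hyrep t, Fin.sum_univ_succ]
        simp only [Fin.cons_zero, Fin.cons_succ]
        ring_nf
    obtain ⟨y, hyg, hyb⟩ := IH (fun i : Fin k => g i.succ) b htl
    by_cases hy0 : dotp y (g 0) ≤ 0
    · refine ⟨y, ?_, hyb⟩
      intro i
      refine Fin.cases hy0 (fun j => hyg j) i
    · push_neg at hy0
      set γ := dotp y (g 0) with hγ
      have hγne : γ ≠ 0 := ne_of_gt hy0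
      set proj : (α → ℝ) → (α → ℝ) := fun v => fun t => v t - (dotp y v / γ) * g 0 t with hproj
      have hdp : ∀ (x v : α → ℝ), dotp x (proj v) = dotp x v - (dotp y v / γ) * dotp x (g 0) :=
        fun x v => dotp_sub_smul_right x v (g 0) _
      have hnc : ¬ InConeF (fun i : Fin k => proj (g i.succ)) (proj b) := by
        rintro ⟨y', hy'0, hy'rep⟩
        refine hb ⟨Fin.cons (dotp y b / γ - ∑ i, y' i * (dotp y (g i.succ) / γ)) y', ?_, ?_⟩
        · intro i
          refine Fin.cases ?_ ?_ i
          · rw [Fin.cons_zero]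
            have h1 : 0 < dotp y b / γ := div_pos hyb hy0
            have h3 : ∑ i, y' i * (dotp y (g i.succ) / γ) ≤ 0 := by
              refine Finset.sum_nonpos (fun i _ => ?_)
              exact mul_nonpos_of_nonneg_of_nonpos (hy'0 i)
                (div_nonpos_of_nonpos_of_nonneg (hyg i) (le_of_lt hy0))
            linarith
          · intro j; rw [Fin.cons_succ]; exact hy'0 j
        · intro t
          rw [Fin.sum_univ_succ]
          simp only [Fin.cons_zero, Fin.cons_succ]
          have hb' := hy'rep t
          simp only [hproj] at hb'
          have expand : ∀ i : Fin k, y' i * (g i.succ t - dotp y (g i.succ) / γ * g 0 t)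
              = y' i * g i.succ t - y' i * (dotp y (g i.succ) / γ) * g 0 t := fun i => by ring
          rw [Finset.sum_congr rfl (fun i _ => expand i), Finset.sum_sub_distrib] at hb'
          rw [sub_mul, Finset.sum_mul]
          linarith [hb']
      obtain ⟨y2, hy2g, hy2b⟩ := IH _ _ hnc
      have key : ∀ v, dotp (fun t => y2 t - (dotp y2 (g 0) / γ) * y t) v = dotp y2 (proj v) := by
        intro v
        rw [dotp_sub_smul_left, hdp]
        ring
      refine ⟨fun t => y2 t - (dotp y2 (g 0) / γ) * y t, ?_, ?_⟩
      · intro i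
        refine Fin.cases ?_ ?_ i
        · rw [key]
          have : proj (g 0) = fun _ => (0:ℝ) := by
            funext t
            simp only [hproj]
            rw [div_self hγne]
            ring
          rw [this]
          simp [dotp]
        · intro j
          rw [key]
          exact hy2g j
      · rw [key]; exact hy2b

theorem farkasFin {ι : Type} [Fintype ι] (g : ι → α → ℝ) (b : α → ℝ)
    (h : ¬ ∃ y : ι → ℝ, (∀ i, 0 ≤ y i) ∧ ∀ t, b t = ∑ i, y i * g i t) :
    ∃ y : α → ℝ, (∀ i, dotp y (g i) ≤ 0) ∧ 0 < dotp y b := by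
  classical
  obtain ⟨e⟩ : Nonempty (ι ≃ Fin (Fintype.card ι)) := ⟨Fintype.equivFin ι⟩
  have hnc : ¬ InConeF (fun j : Fin (Fintype.card ι) => g (e.symm j)) b := by
    rintro ⟨y, hy0, hyrep⟩
    refine h ⟨fun i => y (e i), fun i => hy0 _, fun t => ?_⟩
    rw [hyrep t]
    refine Fintype.sum_equiv e.symm _ _ (fun j => ?_)
    simp only [Equiv.apply_symm_apply]
  obtain ⟨y, hyg, hyb⟩ := farkasF _ b hnc
  exact ⟨y, fun i => by simpa using hyg (e i), hyb⟩

theorem keyLP {κ : Type} [Fintype κ] (T : Finset α) (hT : T.Nonempty) (d : κ → α → ℝ)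
    (hnd : ¬ ∃ y : κ → ℝ, (∀ k, 0 ≤ y k) ∧ (∀ t ∈ T, 0 ≤ ∑ k, y k * d k t) ∧
      ∃ t ∈ T, 0 < ∑ k, y k * d k t) :
    ∃ ρ : α → ℝ, (∀ t ∈ T, 0 < ρ t) ∧ (∀ t ∉ T, ρ t = 0) ∧ (∑ t, ρ t = 1) ∧
      (∀ k, ∑ t, ρ t * d k t ≤ 0) := by
  classical
  set col : α → (κ ⊕ α) → ℝ := fun a => Sum.elim (fun k => if a ∈ T then d k a else 0)
    (fun t => if t ∈ T ∧ t = a then -1 else 0) with hcol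
  set c : (κ ⊕ α) → ℝ := Sum.elim (fun _ => 0) (fun t => if t ∈ T then -1 else 0) with hc
  set gens : ((α ⊕ α) ⊕ (κ ⊕ α)) → (κ ⊕ α) → ℝ :=
    Sum.elim (Sum.elim col (fun a v => - col a v)) (fun r v => if v = r then 1 else 0) with hgens
  have colsum : ∀ (Yf : (κ ⊕ α) → ℝ) (a : α), ∑ v, Yf v * col a v
      = (if a ∈ T then ∑ k, Yf (Sum.inl k) * d k a - Yf (Sum.inr a) else 0) := by
    intro Yf a
    rw [Fintype.sum_sum_type]
    simp only [hcol, Sum.elim_inl, Sum.elim_inr]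
    have h2 : (∑ t : α, Yf (Sum.inr t) * if t ∈ T ∧ t = a then (-1:ℝ) else 0)
        = if a ∈ T then -Yf (Sum.inr a) else 0 := by
      rw [Finset.sum_eq_single a]
      · by_cases ha : a ∈ T <;> simp [ha]
      · intro r _ hr; simp [hr]
      · intro hv; exact absurd (Finset.mem_univ a) hv
    rw [h2]
    by_cases ha : a ∈ T
    · simp only [ha, if_true]; ring
    · simp [ha]
  by_cases hmem : ∃ y : ((α ⊕ α) ⊕ (κ ⊕ α)) → ℝ, (∀ i, 0 ≤ y i) ∧ ∀ v, c v = ∑ i, y i * gens i v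
  · obtain ⟨Y, hY0, hYrep⟩ := hmem
    set x : α → ℝ := fun a => Y (Sum.inl (Sum.inl a)) - Y (Sum.inl (Sum.inr a)) with hx
    have hAx : ∀ v : κ ⊕ α, (∑ a, x a * col a v) + Y (Sum.inr v) = c v := by
      intro v
      rw [hYrep v, Fintype.sum_sum_type, Fintype.sum_sum_type]
      simp only [hgens, Sum.elim_inl, Sum.elim_inr]
      have h3 : ∑ r : κ ⊕ α, Y (Sum.inr r) * (if v = r then 1 else 0) = Y (Sum.inr v) := by
        rw [Finset.sum_eq_single v]
        · simp
        · intro r _ hr; simp [Ne.symm hr]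
        · intro hv; exact absurd (Finset.mem_univ v) hv
      rw [h3]
      have h4 : ∑ a, x a * col a v
          = ∑ a, Y (Sum.inl (Sum.inl a)) * col a v - ∑ a, Y (Sum.inl (Sum.inr a)) * col a v := by
        rw [← Finset.sum_sub_distrib]
        exact Finset.sum_congr rfl (fun a _ => by rw [hx]; ring)
      have h5 : ∑ a, Y (Sum.inl (Sum.inr a)) * -col a v
          = - ∑ a, Y (Sum.inl (Sum.inr a)) * col a v := by
        rw [← Finset.sum_neg_distrib]
        exact Finset.sum_congr rfl (fun a _ => by ring)
      rw [h4, h5]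
      ring
    have hrowk : ∀ k : κ, ∑ t ∈ T, x t * d k t ≤ 0 := by
      intro k
      have h1 := hAx (Sum.inl k)
      simp only [hcol, hc, Sum.elim_inl] at h1
      have hsum : ∑ a, x a * (if a ∈ T then d k a else 0) = ∑ t ∈ T, x t * d k t := by
        simp only [mul_ite, mul_zero]
        rw [Finset.sum_ite_mem, Finset.univ_inter]
      rw [hsum] at h1
      have := hY0 (Sum.inr (Sum.inl k))
      linarith
    have hrowt : ∀ t ∈ T, 1 ≤ x t := by
      intro t ht
      have h1 := hAx (Sum.inr t)
      simp only [hcol, hc, Sum.elim_inr, ht, if_true] at h1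
      have hsum : ∑ a, x a * (if t = a then (-1:ℝ) else 0) = -x t := by
        rw [Finset.sum_eq_single t]
        · simp
        · intro r _ hr; simp [Ne.symm hr]
        · intro hv; exact absurd (Finset.mem_univ t) hv
      simp only [true_and] at h1
      rw [hsum] at h1
      have := hY0 (Sum.inr (Sum.inr t))
      linarith
    set total : ℝ := ∑ t ∈ T, x t with htotal
    have htpos : 0 < total :=
      Finset.sum_pos (fun t ht => lt_of_lt_of_le one_pos (hrowt t ht)) hT
    refine ⟨fun t => if t ∈ T then x t / total else 0, ?_, ?_, ?_, ?_⟩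
    · intro t ht
      simp only [ht, if_true]
      exact div_pos (lt_of_lt_of_le one_pos (hrowt t ht)) htpos
    · intro t ht; simp [ht]
    · rw [Finset.sum_ite_mem, Finset.univ_inter, ← Finset.sum_div]
      exact div_self (ne_of_gt htpos)
    · intro k
      have hsum : ∑ t, (if t ∈ T then x t / total else 0) * d k t
          = (∑ t ∈ T, x t * d k t) / total := by
        simp only [ite_mul, zero_mul]
        rw [Finset.sum_ite_mem, Finset.univ_inter, Finset.sum_div]
        exact Finset.sum_congr rfl (fun t _ => by ring)
      rw [hsum]
      exact div_nonpos_of_nonpos_of_nonneg (hrowk k) (le_of_lt htpos)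
  · exfalso
    obtain ⟨Y, hYg, hYc⟩ := farkasFin gens c hmem
    have hYnonpos : ∀ v : κ ⊕ α, Y v ≤ 0 := by
      intro v
      have h := hYg (Sum.inr v)
      simp only [hgens, Sum.elim_inr, dotp, mul_ite, mul_one, mul_zero,
        Finset.sum_ite_eq', Finset.mem_univ, if_true] at h
      exact h
    have hcolzero : ∀ a ∈ T, ∑ k, Y (Sum.inl k) * d k a - Y (Sum.inr a) = 0 := by
      intro a ha
      have h1 := hYg (Sum.inl (Sum.inl a))
      have h2 := hYg (Sum.inl (Sum.inr a))
      simp only [hgens, Sum.elim_inl, Sum.elim_inr] at h1 h2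
      unfold dotp at h1 h2
      have h2' : ∑ v, Y v * -col a v = - ∑ v, Y v * col a v := by
        rw [← Finset.sum_neg_distrib]
        exact Finset.sum_congr rfl (fun v _ => by ring)
      rw [h2'] at h2
      have hcs := colsum Y a
      rw [if_pos ha] at hcs
      rw [hcs] at h1 h2
      linarith
    have hcval : dotp Y c = ∑ t ∈ T, -Y (Sum.inr t) := by
      unfold dotp
      rw [Fintype.sum_sum_type]
      simp only [hc, Sum.elim_inl, Sum.elim_inr, mul_zero, Finset.sum_const_zero, zero_add]
      simp only [mul_ite, mul_neg, mul_one, mul_zero]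
      rw [Finset.sum_ite_mem, Finset.univ_inter]
    refine hnd ⟨fun k => -Y (Sum.inl k), fun k => by
      have := hYnonpos (Sum.inl k); simp only []; linarith, ?_, ?_⟩
    all_goals simp only []
    · intro t ht
      have h1 := hcolzero t ht
      have h2 : ∑ k, -Y (Sum.inl k) * d k t = -∑ k, Y (Sum.inl k) * d k t := by
        rw [← Finset.sum_neg_distrib]
        exact Finset.sum_congr rfl (fun k _ => by ring)
      rw [h2]
      linarith [hYnonpos (Sum.inr t)]
    · rw [hcval] at hYc
      have hlt : ∑ t ∈ T, (0:ℝ) < ∑ t ∈ T, -Y (Sum.inr t) := by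
        rwa [Finset.sum_const_zero]
      obtain ⟨t, ht, hlt2⟩ := Finset.exists_lt_of_sum_lt hlt
      refine ⟨t, ht, ?_⟩
      have h1 := hcolzero t ht
      have h2 : ∑ k, -Y (Sum.inl k) * d k t = -∑ k, Y (Sum.inl k) * d k t := by
        rw [← Finset.sum_neg_distrib]
        exact Finset.sum_congr rfl (fun k _ => by ring)
      rw [h2]
      linarith

end ICBDAux


namespace ICBD

section OrdinalGames

variable {I : Type} [Fintype I] [DecidableEq I] [Nonempty I]
variable {S : I → Type} [∀ i, Fintype (S i)] [∀ i, DecidableEq (S i)] [∀ i, Nonempty (S i)]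
variable {Z : Type} [Fintype Z]

/-- Profiles of opponents' strategies for player `i`. -/
def Opp (S : I → Type) (i : I) : Type := ∀ j : {j : I // j ≠ i}, S j.1

instance (i : I) : Fintype (Opp S i) :=
  inferInstanceAs (Fintype (∀ j : {j : I // j ≠ i}, S j.1))

instance (i : I) : Nonempty (Opp S i) :=
  ⟨fun _ => Classical.ofNonempty⟩

variable (ζ : (∀ j, S j) → Z) (pref : I → Z → Z → Prop)

/-- The joint strategy profile where `i` plays `si` and the opponents play `t`. -/
def joint (i : I) (si : S i) (t : Opp S i) : ∀ j, S j := fun j =>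
  if h : j = i then cast (congrArg S h.symm) si else t ⟨j, h⟩

/-- Outcome when `i` plays `si` and the opponents play `t`. -/
def out (i : I) (si : S i) (t : Opp S i) : Z := ζ (joint i si t)

/-- Asymmetric part `≻ᵢ` of the preference relation `≿ᵢ`. -/
def SPref (i : I) (x y : Z) : Prop := pref i x y ∧ ¬ pref i y x

/-- `s'` strictly dominates `s` for player `i` against the opponents' profiles in `Q`. -/
def StrictDom (i : I) (Q : Set (Opp S i)) (s' s : S i) : Prop :=
  ∀ t ∈ Q, SPref pref i (out ζ i s' t) (out ζ i s t)

/-- `s'` weakly dominates `s` for player `i` against the opponents' profiles in `Q`. -/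
def WeakDom (i : I) (Q : Set (Opp S i)) (s' s : S i) : Prop :=
  (∀ t ∈ Q, pref i (out ζ i s' t) (out ζ i s t)) ∧
    ∃ t ∈ Q, SPref pref i (out ζ i s' t) (out ζ i s t)

/-- `s` is admissible with respect to the restriction `Ri × Q`. -/
def Admissible (i : I) (Ri : Set (S i)) (Q : Set (Opp S i)) (s : S i) : Prop :=
  s ∈ Ri ∧ ∀ s' ∈ Ri, ¬ WeakDom ζ pref i Q s' s

/-- `s` is Börgers-dominated with respect to the restriction `Ri × Q`. -/
def BDom (i : I) (Ri : Set (S i)) (Q : Set (Opp S i)) (s : S i) : Prop :=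
  ∀ Q' : Set (Opp S i), Q' ⊆ Q → Q'.Nonempty → ¬ Admissible ζ pref i Ri Q' s

/-- Opponents' profiles compatible with the restriction `R`. -/
def OppSet (R : ∀ j, Set (S j)) (i : I) : Set (Opp S i) :=
  {t | ∀ j : {j : I // j ≠ i}, t j ∈ R j.1}

/-- A restriction: componentwise nonempty product. -/
def IsRestriction (R : ∀ j, Set (S j)) : Prop := ∀ j, (R j).Nonempty

variable {H : I → Type} [∀ i, Fintype (H i)] [∀ i, Nonempty (H i)]
variable (Sh : ∀ i, H i → Set (S i)) (Th : ∀ i, H i → Set (Opp S i))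

/-- The replacement property of a dynamic ordinal game in reduced form. -/
def Replacement : Prop :=
  ∀ R : ∀ j, Set (S j), IsRestriction R →
    ∀ (i : I) (h : H i), (R i ∩ Sh i h).Nonempty →
      ∀ s ∈ R i ∩ Sh i h, ∀ s' ∈ R i ∩ Sh i h,
        ∃ s'' ∈ R i ∩ Sh i h,
          (∀ t ∈ OppSet R i ∩ Th i h, out ζ i s'' t = out ζ i s' t) ∧
          ∀ t ∈ OppSet R i \ (OppSet R i ∩ Th i h), out ζ i s'' t = out ζ i s t

/-- `s` is conditionally B-dominated with respect to `R`. -/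
def CondBDom (R : ∀ j, Set (S j)) (i : I) (s : S i) : Prop :=
  ∃ h : H i, s ∈ Sh i h ∧ (R i ∩ Sh i h).Nonempty ∧ (OppSet R i ∩ Th i h).Nonempty ∧
    BDom ζ pref i (R i ∩ Sh i h) (OppSet R i ∩ Th i h) s

/-- Total mass of the weights `p` on the event `E`. -/
noncomputable def measOf {i : I} (p : Opp S i → ℝ) (E : Set (Opp S i)) : ℝ :=
  ∑ t : Opp S i, if t ∈ E then p t else 0

/-- Conditional probability system for player `i`. -/
def IsCPS (i : I) (μ : H i → Opp S i → ℝ) : Prop :=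
  (∀ (h : H i) (t : Opp S i), 0 ≤ μ h t) ∧
  (∀ h : H i, ∑ t : Opp S i, μ h t = 1) ∧
  (∀ h : H i, measOf (μ h) (Th i h) = 1) ∧
  (∀ h h' : H i, Th i h = Th i h' → μ h = μ h') ∧
  ∀ (E : Set (Opp S i)) (h h' : H i), E ⊆ Th i h' → Th i h' ⊆ Th i h →
    measOf (μ h) E = measOf (μ h') E * measOf (μ h) (Th i h')

/-- Outcomes reachable within the restriction `R`. -/
def ZSet (R : ∀ j, Set (S j)) : Set Z := {z | ∃ s : ∀ j, S j, (∀ j, s j ∈ R j) ∧ ζ s = z}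

/-- `u` originates from `≿ᵢ` on the set `D` of outcomes. -/
def OriginatesOn (i : I) (D : Set Z) (u : Z → ℝ) : Prop :=
  ∀ z ∈ D, ∀ z' ∈ D, (u z' ≤ u z ↔ pref i z z')

/-- Bernoulli utility function for player `i`. -/
def Bernoulli (i : I) (u : Z → ℝ) : Prop := ∀ z z' : Z, u z' ≤ u z ↔ pref i z z'

/-- Expected utility of `s` over the opponents' profiles in `Rm` with weights `p`. -/
noncomputable def exValue (i : I) (Rm : Set (Opp S i)) (u : Z → ℝ) (p : Opp S i → ℝ)
    (s : S i) : ℝ :=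
  ∑ t : Opp S i, if t ∈ Rm then u (out ζ i s t) * p t else 0

/-- `sStar` is sequentially rational given `R` and the Bernoulli utility function `u`. -/
def SeqRationalU (R : ∀ j, Set (S j)) (i : I) (u : Z → ℝ) (sStar : S i) : Prop :=
  ∃ μ : H i → Opp S i → ℝ, IsCPS Th i μ ∧
    (∀ h : H i, (R i ∩ Sh i h).Nonempty → (OppSet R i ∩ Th i h).Nonempty →
      measOf (μ h) (OppSet R i ∩ Th i h) = 1) ∧
    ∀ h : H i, sStar ∈ Sh i h → (R i ∩ Sh i h).Nonempty → (OppSet R i ∩ Th i h).Nonempty →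
      ∀ s ∈ R i ∩ Sh i h,
        exValue ζ i (OppSet R i) u (μ h) s ≤ exValue ζ i (OppSet R i) u (μ h) sStar

/-- `sStar` is sequentially rational given `R`. -/
def SeqRational (R : ∀ j, Set (S j)) (i : I) (sStar : S i) : Prop :=
  ∃ u : Z → ℝ, OriginatesOn pref i (ZSet ζ R) u ∧ SeqRationalU ζ Sh Th R i u sStar

/-- `sStar` is cautiously sequentially rational given `R`. -/
def CautSeqRational (R : ∀ j, Set (S j)) (i : I) (sStar : S i) : Prop :=
  ∃ u : Z → ℝ, OriginatesOn pref i (ZSet ζ R) u ∧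
    ∃ μ : H i → Opp S i → ℝ, IsCPS Th i μ ∧
      (∀ h : H i, sStar ∈ Sh i h → (R i ∩ Sh i h).Nonempty →
        (OppSet R i ∩ Th i h).Nonempty → {t | 0 < μ h t} = OppSet R i ∩ Th i h) ∧
      ∀ h : H i, sStar ∈ Sh i h → (R i ∩ Sh i h).Nonempty →
          (OppSet R i ∩ Th i h).Nonempty →
        ∀ s ∈ R i ∩ Sh i h,
          exValue ζ i (OppSet R i) u (μ h) s ≤ exValue ζ i (OppSet R i) u (μ h) sStar

/-- The `𝕌` operator (strategies not conditionally B-dominated). -/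
def Uop (R : ∀ j, Set (S j)) : ∀ j, Set (S j) := fun j =>
  {s ∈ R j | ¬ CondBDom ζ pref Sh Th R j s}

/-- The `𝕊` operator (sequentially rational strategies). -/
def Sop (R : ∀ j, Set (S j)) : ∀ j, Set (S j) := fun j =>
  {s ∈ R j | SeqRational ζ pref Sh Th R j s}

/-- Iterative Conditional B-Dominance started from `R`. -/
def UiterFrom (R : ∀ j, Set (S j)) : ℕ → ∀ j, Set (S j)
  | 0 => R
  | n + 1 => Uop ζ pref Sh Th (UiterFrom R n)

/-- Iterative Conditional B-Dominance started from the full strategy sets. -/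
def Uiter (k : ℕ) : ∀ j, Set (S j) :=
  UiterFrom ζ pref Sh Th (fun _ => Set.univ) k

/-- Ordinal Strong Rationalizability started from `R`. -/
def SiterFrom (R : ∀ j, Set (S j)) : ℕ → ∀ j, Set (S j)
  | 0 => R
  | n + 1 => Sop ζ pref Sh Th (SiterFrom R n)

/-- Ordinal Strong Rationalizability started from the full strategy sets. -/
def Siter (k : ℕ) : ∀ j, Set (S j) :=
  SiterFrom ζ pref Sh Th (fun _ => Set.univ) k

/-- `σ` is a mixed strategy with support in `Ri`. -/
def IsMixedOn (i : I) (Ri : Set (S i)) (σ : S i → ℝ) : Prop :=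
  (∀ s, 0 ≤ σ s) ∧ (∑ s : S i, σ s = 1) ∧ ∀ s, σ s ≠ 0 → s ∈ Ri

/-- `s` is strictly dominated by a mixed strategy, given the utility `u`. -/
def MixedStrictDom (i : I) (Ri : Set (S i)) (Q : Set (Opp S i)) (u : Z → ℝ)
    (s : S i) : Prop :=
  ∃ σ : S i → ℝ, IsMixedOn i Ri σ ∧
    ∀ t ∈ Q, u (out ζ i s t) < ∑ s' : S i, σ s' * u (out ζ i s' t)

/-- The `i`-th component of the `𝕄` operator, given the utility `u` for player `i`. -/
def Mopi (i : I) (u : Z → ℝ) (R : ∀ j, Set (S j)) : Set (S i) :=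
  {s ∈ R i | ∀ h : H i, s ∈ Sh i h → (R i ∩ Sh i h).Nonempty →
    (OppSet R i ∩ Th i h).Nonempty →
    ¬ MixedStrictDom ζ i (R i ∩ Sh i h) (OppSet R i ∩ Th i h) u s}

/-- The `𝕄` operator, given a profile `u` of utilities. -/
def Mop (u : I → Z → ℝ) (R : ∀ j, Set (S j)) : ∀ j, Set (S j) := fun j =>
  Mopi ζ Sh Th j (u j) R

/-- The strong-rationalizability operator `ℝ(·)[u]`, given a profile `u` of utilities. -/
def Rop (u : I → Z → ℝ) (R : ∀ j, Set (S j)) : ∀ j, Set (S j) := fun j =>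
  {s ∈ R j | SeqRationalU ζ Sh Th R j (u j) s}

/-- Strong Rationalizability started from `R`, given a profile `u` of utilities. -/
def RiterFrom (u : I → Z → ℝ) (R : ∀ j, Set (S j)) : ℕ → ∀ j, Set (S j)
  | 0 => R
  | n + 1 => Rop ζ Sh Th u (RiterFrom u R n)

/-- Strong Rationalizability started from the full strategy sets. -/
def Riter (u : I → Z → ℝ) (k : ℕ) : ∀ j, Set (S j) :=
  RiterFrom ζ Sh Th u (fun _ => Set.univ) k

theorem aux_measOf_nonneg {i : I} (p : Opp S i → ℝ) (hp : ∀ t, 0 ≤ p t)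
    (E : Set (Opp S i)) : 0 ≤ measOf p E := by
  unfold measOf
  refine Finset.sum_nonneg (fun t _ => ?_)
  split
  · exact hp t
  · exact le_rfl

theorem aux_measOf_mono {i : I} (p : Opp S i → ℝ) (hp : ∀ t, 0 ≤ p t)
    {E F : Set (Opp S i)} (hEF : E ⊆ F) : measOf p E ≤ measOf p F := by
  unfold measOf
  refine Finset.sum_le_sum (fun t _ => ?_)
  by_cases hE : t ∈ E
  · rw [if_pos hE, if_pos (hEF hE)]
  · rw [if_neg hE]
    split
    · exact hp t
    · exact le_rfl

theorem aux_measOf_ite {i : I} (q : Opp S i → ℝ) (A E : Set (Opp S i)) :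
    measOf (fun t => if t ∈ A then q t else 0) E = measOf q (E ∩ A) := by
  unfold measOf
  refine Finset.sum_congr rfl (fun t _ => ?_)
  by_cases hE : t ∈ E <;> by_cases hA : t ∈ A <;>
    simp [hE, hA, Set.mem_inter_iff]

theorem aux_measOf_div {i : I} (q : Opp S i → ℝ) (c : ℝ) (E : Set (Opp S i)) :
    measOf (fun t => q t / c) E = measOf q E / c := by
  unfold measOf
  rw [Finset.sum_div]
  refine Finset.sum_congr rfl (fun t _ => ?_)
  split
  · rfl
  · rw [zero_div]

theorem aux_measOf_const {i : I} (c : ℝ) (E : Set (Opp S i)) :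
    measOf (fun _ => c) E = ((Finset.univ.filter (· ∈ E)).card : ℝ) * c := by
  unfold measOf
  rw [← Finset.sum_filter, Finset.sum_const, nsmul_eq_mul]

theorem aux_inter_self {i : I} {E F : Set (Opp S i)} (h : E ⊆ F) : E ∩ F = E :=
  Set.inter_eq_left.mpr h

theorem aux_isCPS (i : I) (hTh' : ∀ h : H i, (Th i h).Nonempty) (ρ : Opp S i → ℝ)
    (hρ : ∀ t, 0 ≤ ρ t) :
    IsCPS Th i (fun h t =>
      if 0 < measOf ρ (Th i h) then (if t ∈ Th i h then ρ t / measOf ρ (Th i h) else 0)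
      else (if t ∈ Th i h then (((Finset.univ.filter (· ∈ Th i h)).card : ℝ))⁻¹ else 0)) := by
  have hcard : ∀ h : H i, 0 < (((Finset.univ.filter (· ∈ Th i h)).card : ℝ)) := by
    intro h
    obtain ⟨t, ht⟩ := hTh' h
    have : 0 < (Finset.univ.filter (· ∈ Th i h)).card :=
      Finset.card_pos.2 ⟨t, Finset.mem_filter.2 ⟨Finset.mem_univ t, ht⟩⟩
    exact_mod_cast this
  refine ⟨?_, ?_, ?_, ?_, ?_⟩
  · -- nonneg
    intro h t
    dsimp only
    split
    · split
      · exact div_nonneg (hρ t) (le_of_lt (by assumption))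
      · exact le_rfl
    · split
      · exact inv_nonneg.2 (le_of_lt (hcard h))
      · exact le_rfl
  · -- sums to one
    intro h
    dsimp only
    by_cases hP : 0 < measOf ρ (Th i h)
    · simp only [if_pos hP]
      have h1 : (∑ t, if t ∈ Th i h then ρ t / measOf ρ (Th i h) else 0)
          = measOf (fun t => ρ t / measOf ρ (Th i h)) (Th i h) := rfl
      rw [h1, aux_measOf_div]
      exact div_self (ne_of_gt hP)
    · simp only [if_neg hP]
      have h1 : (∑ t, if t ∈ Th i h then (((Finset.univ.filter (· ∈ Th i h)).card : ℝ))⁻¹ else 0)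
          = measOf (fun _ => (((Finset.univ.filter (· ∈ Th i h)).card : ℝ))⁻¹) (Th i h) := rfl
      rw [h1, aux_measOf_const]
      exact mul_inv_cancel₀ (ne_of_gt (hcard h))
  · -- mass one on Th i h
    intro h
    dsimp only
    by_cases hP : 0 < measOf ρ (Th i h)
    · simp only [if_pos hP]
      rw [aux_measOf_ite, aux_inter_self (subset_refl _), aux_measOf_div]
      exact div_self (ne_of_gt hP)
    · simp only [if_neg hP]
      rw [aux_measOf_ite, aux_inter_self (subset_refl _), aux_measOf_const]
      exact mul_inv_cancel₀ (ne_of_gt (hcard h))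
  · -- A2
    intro h h' hEq
    dsimp only
    funext t
    rw [hEq]
  · -- chain rule
    intro E h h' hE hsub
    dsimp only
    have hPmono : measOf ρ (Th i h') ≤ measOf ρ (Th i h) := aux_measOf_mono ρ hρ hsub
    by_cases hP : 0 < measOf ρ (Th i h)
    · by_cases hP' : 0 < measOf ρ (Th i h')
      · simp only [if_pos hP, if_pos hP']
        rw [aux_measOf_ite, aux_measOf_ite, aux_measOf_ite,
          aux_measOf_div, aux_measOf_div, aux_measOf_div,
          aux_inter_self (hE.trans hsub), aux_inter_self hE, aux_inter_self hsub]
        field_simp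
      · have hP'0 : measOf ρ (Th i h') = 0 :=
          le_antisymm (not_lt.1 hP') (aux_measOf_nonneg ρ hρ _)
        have hE0 : measOf ρ E = 0 :=
          le_antisymm (le_trans (aux_measOf_mono ρ hρ hE) (le_of_eq hP'0))
            (aux_measOf_nonneg ρ hρ E)
        simp only [if_pos hP, if_neg hP']
        rw [aux_measOf_ite (fun t => ρ t / measOf ρ (Th i h)) (Th i h) E,
          aux_measOf_div, aux_inter_self (hE.trans hsub), hE0, zero_div,
          aux_measOf_ite (fun t => ρ t / measOf ρ (Th i h)) (Th i h) (Th i h'),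
          aux_measOf_div, aux_inter_self hsub, hP'0, zero_div, mul_zero]
    · have hP' : ¬ 0 < measOf ρ (Th i h') := fun hc => hP (lt_of_lt_of_le hc hPmono)
      simp only [if_neg hP, if_neg hP']
      rw [aux_measOf_ite, aux_measOf_ite, aux_measOf_ite,
        aux_measOf_const, aux_measOf_const, aux_measOf_const,
        aux_inter_self (hE.trans hsub), aux_inter_self hE, aux_inter_self hsub]
      have h1 := hcard h
      have h2 := hcard h'
      field_simp


set_option maxHeartbeats 1600000 in
theorem exists_utility_CPS_of_not_weaklyDominated
    (hcomp : ∀ (i : I) (x y : Z), pref i x y ∨ pref i y x)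
    (htrans : ∀ i : I, Transitive (pref i))
    (hSh : ∀ (i : I) (h : H i), (Sh i h).Nonempty)
    (hTh : ∀ (i : I) (h : H i), (Th i h).Nonempty)
    (hrep : Replacement ζ Sh Th)
    (R : ∀ j, Set (S j)) (hR : IsRestriction R)
    (i : I) (sStar : S i) (hmem : sStar ∈ R i)
    (hnwd : ∀ h : H i, sStar ∈ Sh i h → (R i ∩ Sh i h).Nonempty →
      (OppSet R i ∩ Th i h).Nonempty →
      ∀ s ∈ R i ∩ Sh i h, ¬ WeakDom ζ pref i (OppSet R i ∩ Th i h) s sStar) :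
    CautSeqRational ζ pref Sh Th R i sStar := by
  classical
  -- the steep utility function
  set Nr : ℝ := (Fintype.card (S i) : ℝ) with hNrdef
  have hNr1 : 1 ≤ Nr := by
    rw [hNrdef]
    exact_mod_cast Nat.one_le_iff_ne_zero.2 (Fintype.card_ne_zero)
  set ε : ℝ := 1 / (Nr + 1) with hεdef
  have hε0 : 0 < ε := by rw [hεdef]; positivity
  have hε1 : ε < 1 := by
    rw [hεdef, div_lt_one (by linarith)]
    linarith
  have hpowle : ∀ m n : ℕ, ε ^ m ≤ ε ^ n ↔ n ≤ m :=
    fun m n => StrictAnti.le_iff_ge (pow_right_strictAnti₀ hε0 hε1)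
  have hpowlt : ∀ m n : ℕ, ε ^ m < ε ^ n ↔ n < m :=
    fun m n => pow_lt_pow_iff_right_of_lt_one₀ hε0 hε1
  set u0 : Z → ℕ := fun z => (Finset.univ.filter (fun z' => pref i z z')).card with hu0
  have hcase : ∀ z z', pref i z z' ↔ u0 z' ≤ u0 z := by
    intro z z'
    constructor
    · intro hp
      apply Finset.card_le_card
      intro w hw
      simp only [Finset.mem_filter, Finset.mem_univ, true_and] at hw ⊢
      exact htrans i hp hw
    · intro hle
      by_contra hnp
      have hp' : pref i z' z := (hcomp i z z').resolve_left hnp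
      have hsub : Finset.univ.filter (fun w => pref i z w)
          ⊆ Finset.univ.filter (fun w => pref i z' w) := by
        intro w hw
        simp only [Finset.mem_filter, Finset.mem_univ, true_and] at hw ⊢
        exact htrans i hp' hw
      have hss : Finset.univ.filter (fun w => pref i z w)
          ⊂ Finset.univ.filter (fun w => pref i z' w) := by
        rw [Finset.ssubset_iff_of_subset hsub]
        refine ⟨z', ?_, ?_⟩
        · simp only [Finset.mem_filter, Finset.mem_univ, true_and]
          rcases hcomp i z' z' with h | h <;> exact h
        · simp only [Finset.mem_filter, Finset.mem_univ, true_and]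
          exact hnp
      have hlt := Finset.card_lt_card hss
      simp only [hu0] at hle
      omega
  set u : Z → ℝ := fun z => -(ε ^ u0 z) with hu
  have hbern : ∀ z z', u z' ≤ u z ↔ pref i z z' := by
    intro z z'
    rw [hu]
    simp only [neg_le_neg_iff]
    rw [hpowle]
    exact (hcase z z').symm
  -- relevant conditional problems and the union of their conditioning events
  set Hrel : Set (H i) := {h | sStar ∈ Sh i h ∧ (OppSet R i ∩ Th i h).Nonempty} with hHrel
  set CStar : Set (Opp S i) := {t | t ∈ OppSet R i ∧ ∃ h ∈ Hrel, t ∈ Th i h} with hCStar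
  set T : Finset (Opp S i) := Finset.univ.filter (· ∈ CStar) with hTdef
  have hTmem : ∀ t, t ∈ T ↔ t ∈ CStar := by
    intro t; simp [hTdef]
  -- local replacement deviations
  set Dset : Set (S i) := {s | s ∈ R i ∧ ∃ h ∈ Hrel, s ∈ Sh i h ∧
    ∀ t ∈ OppSet R i, t ∉ Th i h → out ζ i s t = out ζ i sStar t} with hDset
  set d : {s : S i // s ∈ Dset} → Opp S i → ℝ :=
    fun k t => u (out ζ i k.1 t) - u (out ζ i sStar t) with hd
  -- no element of Dset weakly dominates sStar on CStar
  have pureND : ∀ k : {s : S i // s ∈ Dset}, (∀ t ∈ T, 0 ≤ d k t) →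
      ¬ ∃ t ∈ T, 0 < d k t := by
    rintro ⟨s'', hs''⟩ hge ⟨t0, ht0T, ht0⟩
    obtain ⟨hs''R, h, hrelh, hs''Sh, hagree⟩ := hs''
    have ht0C : t0 ∈ CStar := (hTmem t0).1 ht0T
    have ht0O : t0 ∈ OppSet R i := ht0C.1
    have ht0Th : t0 ∈ Th i h := by
      by_contra hcon
      have := hagree t0 ht0O hcon
      simp only [hd, this, sub_self] at ht0
      exact lt_irrefl 0 ht0
    refine hnwd h hrelh.1 ⟨sStar, hmem, hrelh.1⟩ hrelh.2 s'' ⟨hs''R, hs''Sh⟩ ⟨?_, ?_⟩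
    · intro t ht
      have htC : t ∈ CStar := ⟨ht.1, h, hrelh, ht.2⟩
      have := hge t ((hTmem t).2 htC)
      simp only [hd] at this
      exact (hbern _ _).1 (by linarith)
    · refine ⟨t0, ⟨ht0O, ht0Th⟩, ?_, ?_⟩
      · simp only [hd] at ht0
        exact (hbern _ _).1 (by linarith)
      · intro hpc
        have := (hbern _ _).2 hpc
        simp only [hd] at ht0
        linarith
  -- no mixture over Dset weakly dominates sStar on CStar
  have noMix : ¬ ∃ y : {s : S i // s ∈ Dset} → ℝ, (∀ k, 0 ≤ y k) ∧
      (∀ t ∈ T, 0 ≤ ∑ k, y k * d k t) ∧ ∃ t ∈ T, 0 < ∑ k, y k * d k t := by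
    rintro ⟨y, hy0, hge, t0, ht0T, ht0⟩
    set W : Finset {s : S i // s ∈ Dset} :=
      Finset.univ.filter (fun k => ∃ t ∈ T, d k t < 0) with hW
    have hclass : ∀ k, k ∉ W → ∀ t ∈ T, d k t = 0 := by
      intro k hk t ht
      simp only [hW, Finset.mem_filter, Finset.mem_univ, true_and, not_exists] at hk
      push_neg at hk
      have hge' : ∀ t' ∈ T, 0 ≤ d k t' := fun t' ht' => hk t' ht'
      have hnd := pureND k hge'
      by_contra hne
      exact hnd ⟨t, ht, lt_of_le_of_ne (hge' t ht) (Ne.symm hne)⟩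
    have hgW : ∀ t ∈ T, ∑ k ∈ W, y k * d k t = ∑ k, y k * d k t := by
      intro t ht
      exact Finset.sum_subset (Finset.subset_univ W)
        (fun k _ hk => by rw [hclass k hk t ht, mul_zero])
    set β : ℝ := ∑ k ∈ W, y k with hβ
    have hβ0 : 0 ≤ β := Finset.sum_nonneg (fun k _ => hy0 k)
    have hβpos : 0 < β := by
      rcases lt_or_eq_of_le hβ0 with h | h
      · exact h
      · exfalso
        have hz : ∀ k ∈ W, y k = 0 :=
          (Finset.sum_eq_zero_iff_of_nonneg (fun k _ => hy0 k)).1 h.symm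
        have : ∑ k ∈ W, y k * d k t0 = 0 :=
          Finset.sum_eq_zero (fun k hk => by rw [hz k hk, zero_mul])
        rw [hgW t0 ht0T] at this
        linarith
    have hbound : ∀ k ∈ W, y k ≤ β * ε := by
      intro k hk
      obtain ⟨tk, htkT, htk⟩ : ∃ t ∈ T, d k t < 0 := by
        simpa [hW] using hk
      have hdk : d k tk = ε ^ (u0 (out ζ i sStar tk)) - ε ^ (u0 (out ζ i k.1 tk)) := by
        simp only [hd, hu]
        ring
      have hrlt : u0 (out ζ i k.1 tk) < u0 (out ζ i sStar tk) := by
        rw [hdk] at htk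
        have h2 : ε ^ (u0 (out ζ i sStar tk)) < ε ^ (u0 (out ζ i k.1 tk)) := by linarith
        exact (hpowlt _ _).1 h2
      have hr'pos : 0 < u0 (out ζ i sStar tk) := lt_of_le_of_lt (Nat.zero_le _) hrlt
      have hdkb : d k tk ≤ ε ^ (u0 (out ζ i sStar tk)) - ε ^ (u0 (out ζ i sStar tk) - 1) := by
        rw [hdk]
        have h1 : ε ^ (u0 (out ζ i sStar tk) - 1) ≤ ε ^ (u0 (out ζ i k.1 tk)) :=
          pow_le_pow_of_le_one (le_of_lt hε0) (le_of_lt hε1) (Nat.le_sub_one_of_lt hrlt)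
        linarith
      have hother : ∀ k' : {s : S i // s ∈ Dset}, d k' tk ≤ ε ^ (u0 (out ζ i sStar tk)) := by
        intro k'
        have h1 : 0 ≤ ε ^ (u0 (out ζ i k'.1 tk)) := pow_nonneg (le_of_lt hε0) _
        simp only [hd, hu]
        linarith
      have h0 : 0 ≤ ∑ k' ∈ W, y k' * d k' tk := by
        rw [hgW tk htkT]
        exact hge tk htkT
      have hsplit : ∑ k' ∈ W, y k' * d k' tk
          = y k * d k tk + ∑ k' ∈ W.erase k, y k' * d k' tk :=
        (Finset.add_sum_erase W _ hk).symm
      have h2 : ∑ k' ∈ W.erase k, y k' * d k' tk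
          ≤ ∑ k' ∈ W.erase k, y k' * ε ^ (u0 (out ζ i sStar tk)) :=
        Finset.sum_le_sum (fun k' _ => mul_le_mul_of_nonneg_left (hother k') (hy0 k'))
      have h3 : ∑ k' ∈ W.erase k, y k' * ε ^ (u0 (out ζ i sStar tk))
          = β * ε ^ (u0 (out ζ i sStar tk)) - y k * ε ^ (u0 (out ζ i sStar tk)) := by
        rw [← Finset.sum_mul, Finset.sum_erase_eq_sub hk, ← hβ, sub_mul]
      have h4 : y k * d k tk ≤ y k * ε ^ (u0 (out ζ i sStar tk))
          - y k * ε ^ (u0 (out ζ i sStar tk) - 1) := by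
        calc y k * d k tk
            ≤ y k * (ε ^ (u0 (out ζ i sStar tk)) - ε ^ (u0 (out ζ i sStar tk) - 1)) :=
              mul_le_mul_of_nonneg_left hdkb (hy0 k)
          _ = y k * ε ^ (u0 (out ζ i sStar tk)) - y k * ε ^ (u0 (out ζ i sStar tk) - 1) := by
              ring
      have hcomb : 0 ≤ β * ε ^ (u0 (out ζ i sStar tk))
          - y k * ε ^ (u0 (out ζ i sStar tk) - 1) := by
        rw [hsplit] at h0
        linarith
      have hεr : ε ^ (u0 (out ζ i sStar tk))
          = ε * ε ^ (u0 (out ζ i sStar tk) - 1) := by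
        conv_lhs => rw [show u0 (out ζ i sStar tk) = (u0 (out ζ i sStar tk) - 1) + 1 from
          (Nat.succ_pred_eq_of_pos hr'pos).symm]
        rw [pow_succ]
        ring
      have hpow : 0 < ε ^ (u0 (out ζ i sStar tk) - 1) := pow_pos hε0 _
      have h5 : y k * ε ^ (u0 (out ζ i sStar tk) - 1)
          ≤ (β * ε) * ε ^ (u0 (out ζ i sStar tk) - 1) := by
        rw [hεr] at hcomb
        nlinarith
      exact le_of_mul_le_mul_right h5 hpow
    have hcardW : (W.card : ℝ) ≤ Nr := by
      have h1 : W.card = (W.image (fun k => k.1)).card :=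
        (Finset.card_image_of_injective W Subtype.val_injective).symm
      have h2 : (W.image (fun k => k.1)).card ≤ Fintype.card (S i) :=
        Finset.card_le_card (Finset.subset_univ _) |>.trans (le_of_eq Finset.card_univ)
      rw [hNrdef]
      exact_mod_cast h1 ▸ h2
    have hsumW : β ≤ (W.card : ℝ) * (β * ε) := by
      calc β = ∑ k ∈ W, y k := hβ
        _ ≤ ∑ _k ∈ W, β * ε := Finset.sum_le_sum hbound
        _ = (W.card : ℝ) * (β * ε) := by rw [Finset.sum_const, nsmul_eq_mul]
    have hεN : ε * Nr < 1 := by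
      rw [hεdef, div_mul_eq_mul_div, one_mul, div_lt_one (by linarith)]
      linarith
    have hstep : (W.card : ℝ) * (β * ε) ≤ Nr * (β * ε) :=
      mul_le_mul_of_nonneg_right hcardW (mul_nonneg hβ0 (le_of_lt hε0))
    nlinarith [mul_pos hβpos (sub_pos.2 hεN)]
  -- the belief on CStar
  obtain ⟨ρ, hρnn, hρsupp, hρopt⟩ : ∃ ρ : Opp S i → ℝ, (∀ t, 0 ≤ ρ t) ∧
      (∀ t, 0 < ρ t ↔ t ∈ CStar) ∧ ∀ k : {s : S i // s ∈ Dset}, ∑ t, ρ t * d k t ≤ 0 := by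
    by_cases hne : CStar.Nonempty
    · obtain ⟨t1, ht1⟩ := hne
      have hTne : T.Nonempty := ⟨t1, (hTmem t1).2 ht1⟩
      obtain ⟨ρ, h1, h2, _h3, h4⟩ := ICBDAux.keyLP T hTne d noMix
      refine ⟨ρ, ?_, ?_, h4⟩
      · intro t
        by_cases ht : t ∈ T
        · exact le_of_lt (h1 t ht)
        · rw [h2 t ht]
      · intro t
        constructor
        · intro hpos
          by_contra hC
          exact absurd (h2 t (fun hT' => hC ((hTmem t).1 hT'))) (ne_of_gt hpos)
        · intro hC
          exact h1 t ((hTmem t).2 hC)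
    · refine ⟨fun _ => 0, fun t => le_rfl, ?_, ?_⟩
      · intro t
        exact ⟨fun h0 => absurd h0 (lt_irrefl 0), fun hC => absurd ⟨t, hC⟩ hne⟩
      · intro k
        simp
  -- assemble the conclusion
  refine ⟨u, fun z _ z' _ => hbern z z', fun h t =>
    if 0 < measOf ρ (Th i h) then (if t ∈ Th i h then ρ t / measOf ρ (Th i h) else 0)
    else (if t ∈ Th i h then (((Finset.univ.filter (· ∈ Th i h)).card : ℝ))⁻¹ else 0),
    aux_isCPS Th i (hTh i) ρ hρnn, ?_, ?_⟩
  · -- full support at relevant h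
    intro h hsSh _hRS hQne
    obtain ⟨t1, ht1⟩ := hQne
    have hrelh : h ∈ Hrel := ⟨hsSh, ⟨t1, ht1⟩⟩
    have hρt1 : 0 < ρ t1 := (hρsupp t1).2 ⟨ht1.1, h, hrelh, ht1.2⟩
    have hP : 0 < measOf ρ (Th i h) := by
      have hle : (if t1 ∈ Th i h then ρ t1 else 0) ≤ measOf ρ (Th i h) := by
        unfold measOf
        exact Finset.single_le_sum
          (f := fun t => if t ∈ Th i h then ρ t else 0)
          (fun t _ => by split; exacts [hρnn t, le_rfl]) (Finset.mem_univ t1)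
      rw [if_pos ht1.2] at hle
      linarith
    ext t
    simp only [Set.mem_setOf_eq, Set.mem_inter_iff, if_pos hP]
    constructor
    · intro hpos
      by_cases htT : t ∈ Th i h
      · rw [if_pos htT] at hpos
        have hρt : 0 < ρ t := by
          by_contra hc
          rw [le_antisymm (not_lt.1 hc) (hρnn t), zero_div] at hpos
          exact lt_irrefl 0 hpos
        exact ⟨((hρsupp t).1 hρt).1, htT⟩
      · rw [if_neg htT] at hpos
        exact absurd hpos (lt_irrefl 0)
    · rintro ⟨htO, htT⟩
      rw [if_pos htT]
      exact div_pos ((hρsupp t).2 ⟨htO, h, hrelh, htT⟩) hP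
  · -- sequential optimality at relevant h
    intro h hsSh hRS hQne s hs
    obtain ⟨t1, ht1⟩ := hQne
    have hrelh : h ∈ Hrel := ⟨hsSh, ⟨t1, ht1⟩⟩
    have hρt1 : 0 < ρ t1 := (hρsupp t1).2 ⟨ht1.1, h, hrelh, ht1.2⟩
    have hP : 0 < measOf ρ (Th i h) := by
      have hle : (if t1 ∈ Th i h then ρ t1 else 0) ≤ measOf ρ (Th i h) := by
        unfold measOf
        exact Finset.single_le_sum
          (f := fun t => if t ∈ Th i h then ρ t else 0)
          (fun t _ => by split; exacts [hρnn t, le_rfl]) (Finset.mem_univ t1)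
      rw [if_pos ht1.2] at hle
      linarith
    -- obtain the replacement deviation
    obtain ⟨s'', hs''mem, hag1, hag2⟩ :=
      hrep R hR i h ⟨sStar, hmem, hsSh⟩ sStar ⟨hmem, hsSh⟩ s hs
    have hs''D : s'' ∈ Dset := by
      refine ⟨hs''mem.1, h, hrelh, hs''mem.2, ?_⟩
      intro t htO htT
      exact hag2 t ⟨htO, fun hc => htT hc.2⟩
    have hA := hρopt ⟨s'', hs''D⟩
    simp only [hd] at hA
    unfold exValue
    simp only [if_pos hP]
    rw [← sub_nonneg, ← Finset.sum_sub_distrib]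
    have hpt : ∀ t : Opp S i,
        ((if t ∈ OppSet R i then u (out ζ i sStar t) *
          (if t ∈ Th i h then ρ t / measOf ρ (Th i h) else 0) else 0)
        - (if t ∈ OppSet R i then u (out ζ i s t) *
          (if t ∈ Th i h then ρ t / measOf ρ (Th i h) else 0) else 0))
        = (u (out ζ i sStar t) - u (out ζ i s'' t)) * (ρ t / measOf ρ (Th i h)) := by
      intro t
      by_cases hρt : 0 < ρ t
      · have htC : t ∈ CStar := (hρsupp t).1 hρt
        have htO : t ∈ OppSet R i := htC.1
        by_cases htT : t ∈ Th i h
        · rw [if_pos htO, if_pos htO, if_pos htT, ← hag1 t ⟨htO, htT⟩]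
          ring
        · rw [if_pos htO, if_pos htO, if_neg htT, hag2 t ⟨htO, fun hc => htT hc.2⟩]
          ring
      · have hρ0 : ρ t = 0 := le_antisymm (not_lt.1 hρt) (hρnn t)
        rw [hρ0, zero_div]
        by_cases htO : t ∈ OppSet R i <;> by_cases htT : t ∈ Th i h <;>
          simp [htO, htT]
    rw [Finset.sum_congr rfl (fun t _ => hpt t)]
    have hsum2 : ∑ t, (u (out ζ i sStar t) - u (out ζ i s'' t)) * (ρ t / measOf ρ (Th i h))
        = (∑ t, ρ t * (u (out ζ i s'' t) - u (out ζ i sStar t))) * (-(measOf ρ (Th i h))⁻¹) := by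
      rw [Finset.sum_mul]
      refine Finset.sum_congr rfl (fun t _ => ?_)
      rw [div_eq_mul_inv]
      ring
    rw [hsum2]
    have hinv : 0 ≤ (measOf ρ (Th i h))⁻¹ := inv_nonneg.2 (le_of_lt hP)
    nlinarith


end OrdinalGames

end ICBD
end

section
/- In a dynamic ordinal game in reduced form satisfying the replacement property, for every restriction R and every player i ∈ I, a strategy s*_i ∈ R_i is cautiously sequentially rational given R if and only if for every h ∈ H_i(s*_i) with R^i(h) nonempty, s*_i is not weakly dominated relative to R^i(h). -/
open scoped Classical

namespace ICBD

section OrdinalGames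

variable {I : Type} [Fintype I] [DecidableEq I] [Nonempty I]
variable {S : I → Type} [∀ i, Fintype (S i)] [∀ i, DecidableEq (S i)] [∀ i, Nonempty (S i)]
variable {Z : Type} [Fintype Z]

variable (ζ : (∀ j, S j) → Z) (pref : I → Z → Z → Prop)

variable {H : I → Type} [∀ i, Fintype (H i)] [∀ i, Nonempty (H i)]
variable (Sh : ∀ i, H i → Set (S i)) (Th : ∀ i, H i → Set (Opp S i))

/-! ### Auxiliary lemmas -/

lemma exists_rank (i : I) (hcomp : ∀ x y : Z, pref i x y ∨ pref i y x)
    (htrans : Transitive (pref i)) :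
    ∃ r : Z → ℕ, (∀ z z' : Z, r z' ≤ r z ↔ pref i z z') ∧ ∀ z, r z ≤ Fintype.card Z := by
  refine ⟨fun z => (Finset.univ.filter (fun w => SPref pref i z w)).card,
    fun z z' => ?_, fun z => ?_⟩
  · constructor
    · intro hle
      simp only [] at hle
      by_contra hnp
      have hzz' : pref i z' z := (hcomp z z').resolve_left hnp
      have hsub : (Finset.univ.filter (fun w => SPref pref i z w)) ⊆
          (Finset.univ.filter (fun w => SPref pref i z' w)) := by
        intro w hw
        simp only [Finset.mem_filter, Finset.mem_univ, true_and] at hw ⊢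
        exact ⟨htrans hzz' hw.1, fun hc => hw.2 (htrans hc hzz')⟩
      have hz' : z ∈ Finset.univ.filter (fun w => SPref pref i z' w) := by
        simp only [Finset.mem_filter, Finset.mem_univ, true_and]
        exact ⟨hzz', hnp⟩
      have hz : z ∉ Finset.univ.filter (fun w => SPref pref i z w) := by
        simp only [Finset.mem_filter, Finset.mem_univ, true_and]
        exact fun hc => hc.2 hc.1
      have hlt := Finset.card_lt_card ((Finset.ssubset_iff_of_subset hsub).mpr ⟨z, hz', hz⟩)
      omega
    · intro hp
      apply Finset.card_le_card
      intro w hw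
      simp only [Finset.mem_filter, Finset.mem_univ, true_and] at hw ⊢
      exact ⟨htrans hp hw.1, fun hc => hw.2 (htrans hc hp)⟩
  · simpa using Finset.card_filter_le Finset.univ (fun w => SPref pref i z w)

lemma measOf_nonneg {i : I} {f : Opp S i → ℝ} (hf : ∀ t, 0 ≤ f t) (E : Set (Opp S i)) :
    0 ≤ measOf f E := by
  unfold measOf
  refine Finset.sum_nonneg fun t _ => ?_
  split
  · exact hf t
  · exact le_rfl

lemma measOf_pos {i : I} {f : Opp S i → ℝ} (hf : ∀ t, 0 ≤ f t) {E : Set (Opp S i)}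
    {t0 : Opp S i} (ht0 : t0 ∈ E) (hpos : 0 < f t0) : 0 < measOf f E := by
  unfold measOf
  refine Finset.sum_pos' (fun t _ => ?_) ⟨t0, Finset.mem_univ _, ?_⟩
  · split
    · exact hf t
    · exact le_rfl
  · rw [if_pos ht0]; exact hpos

lemma measOf_eq_zero {i : I} (f : Opp S i → ℝ) {E : Set (Opp S i)}
    (h : ∀ t, t ∉ E) : measOf f E = 0 := by
  unfold measOf
  exact Finset.sum_eq_zero fun t _ => if_neg (h t)

lemma measOf_univ {i : I} (f : Opp S i → ℝ) : measOf f Set.univ = ∑ t : Opp S i, f t := by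
  unfold measOf
  simp

lemma measOf_restrict {i : I} (f : Opp S i → ℝ) (c : ℝ) (A D : Set (Opp S i)) :
    measOf (Set.indicator A (fun t => f t / c)) D = measOf f (A ∩ D) / c := by
  unfold measOf
  rw [Finset.sum_div]
  refine Finset.sum_congr rfl fun t _ => ?_
  by_cases h2 : t ∈ D
  · rw [if_pos h2]
    by_cases h1 : t ∈ A
    · rw [Set.indicator_of_mem h1, if_pos (Set.mem_inter h1 h2)]
    · rw [Set.indicator_of_notMem h1, if_neg (fun hc => h1 hc.1), zero_div]
  · rw [if_neg h2, if_neg (fun hc => h2 hc.2), zero_div]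

lemma measOf_restrict_one {i : I} (c : ℝ) (A D : Set (Opp S i)) :
    measOf (Set.indicator A (fun _ => (1:ℝ) / c)) D
      = measOf (fun _ => (1:ℝ)) (A ∩ D) / c := by
  unfold measOf
  rw [Finset.sum_div]
  refine Finset.sum_congr rfl fun t _ => ?_
  by_cases h2 : t ∈ D
  · rw [if_pos h2]
    by_cases h1 : t ∈ A
    · rw [Set.indicator_of_mem h1, if_pos (Set.mem_inter h1 h2)]
    · rw [Set.indicator_of_notMem h1, if_neg (fun hc => h1 hc.1), zero_div]
  · rw [if_neg h2, if_neg (fun hc => h2 hc.2), zero_div]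

lemma exValue_restrict (i : I) (u : Z → ℝ) (f : Opp S i → ℝ) (c : ℝ)
    {W Q : Set (Opp S i)} (hWQ : W ⊆ Q) (s : S i) :
    exValue ζ i Q u (Set.indicator W (fun t => f t / c)) s
      = (∑ t : Opp S i, Set.indicator W (fun t => u (out ζ i s t) * f t) t) / c := by
  unfold exValue
  rw [Finset.sum_div]
  refine Finset.sum_congr rfl fun t _ => ?_
  by_cases h1 : t ∈ W
  · have h2 : t ∈ Q := hWQ h1
    rw [if_pos h2, Set.indicator_of_mem h1, Set.indicator_of_mem h1, mul_div_assoc]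
  · rw [Set.indicator_of_notMem h1]
    by_cases h2 : t ∈ Q
    · rw [if_pos h2, Set.indicator_of_notMem h1, mul_zero, zero_div]
    · rw [if_neg h2, Set.indicator_of_notMem h1, zero_div]

lemma out_mem_ZSet (i : I) (R : ∀ j, Set (S j)) {si : S i} (hsi : si ∈ R i)
    {t : Opp S i} (ht : t ∈ OppSet R i) : out ζ i si t ∈ ZSet ζ R := by
  refine ⟨joint i si t, fun j => ?_, rfl⟩
  by_cases hj : j = i
  · subst hj
    have hji : joint j si t j = si := by
      unfold joint
      rw [dif_pos rfl]
      exact cast_eq _ si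
    rw [hji]
    exact hsi
  · have hji : joint i si t j = t ⟨j, hj⟩ := by
      unfold joint
      rw [dif_neg hj]
    rw [hji]
    exact ht ⟨j, hj⟩

theorem cautSeqRational_iff_not_weaklyDominated
    (hcomp : ∀ (i : I) (x y : Z), pref i x y ∨ pref i y x)
    (htrans : ∀ i : I, Transitive (pref i))
    (hSh : ∀ (i : I) (h : H i), (Sh i h).Nonempty)
    (hTh : ∀ (i : I) (h : H i), (Th i h).Nonempty)
    (hrep : Replacement ζ Sh Th)
    (R : ∀ j, Set (S j)) (hR : IsRestriction R)
    (i : I) (sStar : S i) (hmem : sStar ∈ R i) :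
    CautSeqRational ζ pref Sh Th R i sStar ↔
      ∀ h : H i, sStar ∈ Sh i h → (R i ∩ Sh i h).Nonempty →
        (OppSet R i ∩ Th i h).Nonempty →
        ∀ s ∈ R i ∩ Sh i h, ¬ WeakDom ζ pref i (OppSet R i ∩ Th i h) s sStar := by
  constructor
  · -- cautious sequential rationality implies conditional admissibility
    rintro ⟨u, hu, μ, hCPS, hsupp, hopt⟩ h hsh hne1 hne2 s hs hWD
    have hle := hopt h hsh hne1 hne2 s hs
    have hsuppEq := hsupp h hsh hne1 hne2
    have hlt : exValue ζ i (OppSet R i) u (μ h) sStar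
        < exValue ζ i (OppSet R i) u (μ h) s := by
      unfold exValue
      refine Finset.sum_lt_sum (fun t _ => ?_) ?_
      · by_cases htQ : t ∈ OppSet R i
        · rw [if_pos htQ, if_pos htQ]
          rcases eq_or_lt_of_le (hCPS.1 h t) with hzero | hpos
          · rw [← hzero, mul_zero, mul_zero]
          · have htW : t ∈ OppSet R i ∩ Th i h := by
              rw [← hsuppEq]; exact hpos
            have hpref : pref i (out ζ i s t) (out ζ i sStar t) := hWD.1 t htW
            have hub := (hu _ (out_mem_ZSet ζ i R hs.1 htQ) _
              (out_mem_ZSet ζ i R hmem htQ)).mpr hpref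
            exact mul_le_mul_of_nonneg_right hub (hCPS.1 h t)
        · rw [if_neg htQ, if_neg htQ]
      · obtain ⟨t0, ht0, hsp⟩ := hWD.2
        refine ⟨t0, Finset.mem_univ _, ?_⟩
        have ht0Q : t0 ∈ OppSet R i := ht0.1
        have hpos : 0 < μ h t0 := by
          have hmem0 : t0 ∈ {t | 0 < μ h t} := by rw [hsuppEq]; exact ht0
          exact hmem0
        rw [if_pos ht0Q, if_pos ht0Q]
        have hblt : u (out ζ i sStar t0) < u (out ζ i s t0) := by
          have hb : ¬ (u (out ζ i s t0) ≤ u (out ζ i sStar t0)) := fun hc =>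
            hsp.2 ((hu _ (out_mem_ZSet ζ i R hmem ht0Q) _
              (out_mem_ZSet ζ i R hs.1 ht0Q)).mp hc)
          exact not_le.mp hb
        exact mul_lt_mul_of_pos_right hblt hpos
    exact absurd hle (not_le.mpr hlt)
  · -- conditional admissibility implies cautious sequential rationality
    intro hAdm
    obtain ⟨r, hr, hrK⟩ := exists_rank pref i (hcomp i) (htrans i)
    set K := Fintype.card Z with hK
    set N := Fintype.card (Opp S i) with hN
    set ε : ℝ := 1 / ((N : ℝ) * (K : ℝ) + 1) with hεDef
    have hNK1 : (0:ℝ) < (N : ℝ) * (K : ℝ) + 1 := by positivity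
    have hε0 : 0 < ε := by rw [hεDef]; positivity
    have hε1 : ε ≤ 1 := by
      rw [hεDef, div_le_one hNK1]
      have : (0:ℝ) ≤ (N : ℝ) * (K : ℝ) := by positivity
      linarith
    have hεN : (N : ℝ) * (K : ℝ) * ε ≤ 1 := by
      rw [hεDef, mul_one_div, div_le_one hNK1]
      linarith
    set F : ℕ → ℝ := fun n => ∑ j ∈ Finset.range n, ε ^ (j + 1) with hFDef
    have hF_at : ∀ n, F n = ∑ j ∈ Finset.range n, ε ^ (j + 1) := fun n => by rw [hFDef]
    have hFmono : StrictMono F := by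
      apply strictMono_nat_of_lt_succ
      intro n
      rw [hF_at, hF_at, Finset.sum_range_succ]
      exact lt_add_of_pos_right _ (pow_pos hε0 (n + 1))
    set u : Z → ℝ := fun z => F (r z) with huDef
    have hu_at : ∀ z, u z = F (r z) := fun z => by rw [huDef]
    have hu_iff : ∀ z z' : Z, u z' ≤ u z ↔ pref i z z' := by
      intro z z'
      rw [hu_at, hu_at, hFmono.le_iff_le, hr]
    set ν : Opp S i → ℝ :=
      fun t => if t ∈ OppSet R i then ε ^ (K - r (out ζ i sStar t)) else 0 with hνDef
    have hν_at : ∀ t, ν t = if t ∈ OppSet R i then ε ^ (K - r (out ζ i sStar t)) else 0 :=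
      fun t => by rw [hνDef]
    have hν0 : ∀ t, 0 ≤ ν t := by
      intro t
      rw [hν_at]
      split
      · exact le_of_lt (pow_pos hε0 _)
      · exact le_rfl
    have hνpos : ∀ t, t ∈ OppSet R i → 0 < ν t := by
      intro t ht
      rw [hν_at, if_pos ht]
      exact pow_pos hε0 _
    set M : Set (Opp S i) → Opp S i → ℝ := fun T =>
      if (OppSet R i ∩ T).Nonempty then
        Set.indicator (OppSet R i ∩ T) (fun t => ν t / measOf ν (OppSet R i ∩ T))
      else
        Set.indicator T (fun _ => (1:ℝ) / measOf (fun _ => (1:ℝ)) T)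
      with hMDef
    have hM_pos : ∀ (T : Set (Opp S i)), (OppSet R i ∩ T).Nonempty →
        M T = Set.indicator (OppSet R i ∩ T) (fun t => ν t / measOf ν (OppSet R i ∩ T)) := by
      intro T hT
      rw [hMDef]
      exact if_pos hT
    have hM_neg : ∀ (T : Set (Opp S i)), ¬ (OppSet R i ∩ T).Nonempty →
        M T = Set.indicator T (fun _ => (1:ℝ) / measOf (fun _ => (1:ℝ)) T) := by
      intro T hT
      rw [hMDef]
      exact if_neg hT
    have hcpos : ∀ (T : Set (Opp S i)), (OppSet R i ∩ T).Nonempty →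
        0 < measOf ν (OppSet R i ∩ T) := by
      rintro T ⟨t1, ht1⟩
      exact measOf_pos hν0 ht1 (hνpos t1 ht1.1)
    have hupos : ∀ (T : Set (Opp S i)), T.Nonempty → 0 < measOf (fun _ => (1:ℝ)) T := by
      rintro T ⟨t1, ht1⟩
      exact measOf_pos (fun _ => zero_le_one) ht1 one_pos
    set μ : H i → Opp S i → ℝ := fun h => M (Th i h) with hμDef
    have hμAt : ∀ h, μ h = M (Th i h) := fun h => by rw [hμDef]
    -- the key expected-difference inequality
    have hkey : ∀ (h : H i), sStar ∈ Sh i h → (R i ∩ Sh i h).Nonempty →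
        (OppSet R i ∩ Th i h).Nonempty → ∀ s ∈ R i ∩ Sh i h,
        (∑ t : Opp S i, Set.indicator (OppSet R i ∩ Th i h)
            (fun t => (u (out ζ i s t) - u (out ζ i sStar t)) * ν t) t) ≤ 0 := by
      intro h hsh hne1 hne2 s hs
      have hWD := hAdm h hsh hne1 hne2 s hs
      by_cases hA : ∃ t ∈ OppSet R i ∩ Th i h, ¬ pref i (out ζ i s t) (out ζ i sStar t)
      · obtain ⟨tm, htm, hnp⟩ := hA
        have hab : r (out ζ i s tm) < r (out ζ i sStar tm) :=
          lt_of_not_ge fun hba => hnp ((hr _ _).mp hba)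
        have hbound : ∀ t : Opp S i,
            Set.indicator (OppSet R i ∩ Th i h)
              (fun t => (u (out ζ i s t) - u (out ζ i sStar t)) * ν t) t
            ≤ (K : ℝ) * ε ^ (K + 1) := by
          intro t
          have hCnn : (0:ℝ) ≤ (K : ℝ) * ε ^ (K + 1) := by positivity
          by_cases htW : t ∈ OppSet R i ∩ Th i h
          · rw [Set.indicator_of_mem htW]
            have hbK : r (out ζ i sStar t) ≤ K := hrK _
            have haK : r (out ζ i s t) ≤ K := hrK _
            have hνt : ν t = ε ^ (K - r (out ζ i sStar t)) := by
              rw [hν_at, if_pos htW.1]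
            by_cases hle : r (out ζ i s t) ≤ r (out ζ i sStar t)
            · have hdle : u (out ζ i s t) - u (out ζ i sStar t) ≤ 0 := by
                rw [hu_at, hu_at]
                exact sub_nonpos.mpr (hFmono.monotone hle)
              calc (u (out ζ i s t) - u (out ζ i sStar t)) * ν t
                  ≤ 0 := mul_nonpos_of_nonpos_of_nonneg hdle (hν0 t)
                _ ≤ (K : ℝ) * ε ^ (K + 1) := hCnn
            · push_neg at hle
              have hdiff : u (out ζ i s t) - u (out ζ i sStar t)
                  = ∑ j ∈ Finset.Ico (r (out ζ i sStar t)) (r (out ζ i s t)), ε ^ (j + 1) := by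
                rw [hu_at, hu_at, hF_at, hF_at,
                  Finset.sum_Ico_eq_sub _ (le_of_lt hle)]
              have hdub : u (out ζ i s t) - u (out ζ i sStar t)
                  ≤ (K : ℝ) * ε ^ (r (out ζ i sStar t) + 1) := by
                rw [hdiff]
                have h1 := Finset.sum_le_card_nsmul
                  (Finset.Ico (r (out ζ i sStar t)) (r (out ζ i s t)))
                  (fun j => ε ^ (j + 1)) (ε ^ (r (out ζ i sStar t) + 1))
                  (fun j hj => by
                    rw [Finset.mem_Ico] at hj
                    exact pow_le_pow_of_le_one hε0.le hε1 (by omega))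
                rw [nsmul_eq_mul] at h1
                refine le_trans h1 ?_
                apply mul_le_mul_of_nonneg_right _ (le_of_lt (pow_pos hε0 _))
                rw [Nat.card_Ico]
                exact_mod_cast le_trans (Nat.sub_le _ _) haK
              rw [hνt]
              calc (u (out ζ i s t) - u (out ζ i sStar t)) * ε ^ (K - r (out ζ i sStar t))
                  ≤ ((K : ℝ) * ε ^ (r (out ζ i sStar t) + 1)) * ε ^ (K - r (out ζ i sStar t)) :=
                    mul_le_mul_of_nonneg_right hdub (le_of_lt (pow_pos hε0 _))
                _ = (K : ℝ) * ε ^ (K + 1) := by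
                    rw [mul_assoc, ← pow_add]
                    have hexp : r (out ζ i sStar t) + 1 + (K - r (out ζ i sStar t)) = K + 1 := by
                      omega
                    rw [hexp]
          · rw [Set.indicator_of_notMem htW]
            exact hCnn
        have hloss : Set.indicator (OppSet R i ∩ Th i h)
              (fun t => (u (out ζ i s t) - u (out ζ i sStar t)) * ν t) tm ≤ -ε ^ K := by
          rw [Set.indicator_of_mem htm]
          have hb1 : 1 ≤ r (out ζ i sStar tm) := by omega
          have hbK : r (out ζ i sStar tm) ≤ K := hrK _
          have hνt : ν tm = ε ^ (K - r (out ζ i sStar tm)) := by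
            rw [hν_at, if_pos htm.1]
          have hdiff : u (out ζ i sStar tm) - u (out ζ i s tm)
              = ∑ j ∈ Finset.Ico (r (out ζ i s tm)) (r (out ζ i sStar tm)), ε ^ (j + 1) := by
            rw [hu_at, hu_at, hF_at, hF_at, Finset.sum_Ico_eq_sub _ (le_of_lt hab)]
          have hsingle : ε ^ (r (out ζ i sStar tm)) ≤
              ∑ j ∈ Finset.Ico (r (out ζ i s tm)) (r (out ζ i sStar tm)), ε ^ (j + 1) := by
            have hmem' : r (out ζ i sStar tm) - 1
                ∈ Finset.Ico (r (out ζ i s tm)) (r (out ζ i sStar tm)) :=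
              Finset.mem_Ico.mpr ⟨by omega, by omega⟩
            have h2 := Finset.single_le_sum (f := fun j => ε ^ (j + 1))
              (fun j _ => le_of_lt (pow_pos hε0 _)) hmem'
            have hexp : r (out ζ i sStar tm) - 1 + 1 = r (out ζ i sStar tm) := by omega
            calc ε ^ (r (out ζ i sStar tm))
                = ε ^ (r (out ζ i sStar tm) - 1 + 1) := by rw [hexp]
              _ ≤ _ := h2
          have hd2 : u (out ζ i s tm) - u (out ζ i sStar tm) ≤ -ε ^ (r (out ζ i sStar tm)) := by
            rw [← hdiff] at hsingle
            linarith
          rw [hνt]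
          calc (u (out ζ i s tm) - u (out ζ i sStar tm)) * ε ^ (K - r (out ζ i sStar tm))
              ≤ (-ε ^ (r (out ζ i sStar tm))) * ε ^ (K - r (out ζ i sStar tm)) :=
                mul_le_mul_of_nonneg_right hd2 (le_of_lt (pow_pos hε0 _))
            _ = -ε ^ K := by
                rw [neg_mul, ← pow_add]
                have hexp2 : r (out ζ i sStar tm) + (K - r (out ζ i sStar tm)) = K := by omega
                rw [hexp2]
        rw [← Finset.sum_erase_add Finset.univ _ (Finset.mem_univ tm)]
        have hsum1 : (∑ t ∈ Finset.univ.erase tm, Set.indicator (OppSet R i ∩ Th i h)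
              (fun t => (u (out ζ i s t) - u (out ζ i sStar t)) * ν t) t)
            ≤ (N : ℝ) * ((K : ℝ) * ε ^ (K + 1)) := by
          have h1 := Finset.sum_le_card_nsmul (Finset.univ.erase tm)
            (fun t => Set.indicator (OppSet R i ∩ Th i h)
              (fun t => (u (out ζ i s t) - u (out ζ i sStar t)) * ν t) t)
            ((K : ℝ) * ε ^ (K + 1)) (fun t _ => hbound t)
          rw [nsmul_eq_mul] at h1
          refine le_trans h1 ?_
          apply mul_le_mul_of_nonneg_right _ (by positivity)
          rw [Finset.card_erase_of_mem (Finset.mem_univ tm), Finset.card_univ, hN]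
          exact_mod_cast Nat.sub_le _ _
        have hfin : (N : ℝ) * ((K : ℝ) * ε ^ (K + 1)) ≤ ε ^ K := by
          have h1 : (N : ℝ) * ((K : ℝ) * ε ^ (K + 1)) = ((N : ℝ) * (K : ℝ) * ε) * ε ^ K := by
            rw [pow_succ]; ring
          rw [h1]
          calc ((N : ℝ) * (K : ℝ) * ε) * ε ^ K ≤ 1 * ε ^ K :=
              mul_le_mul_of_nonneg_right hεN (le_of_lt (pow_pos hε0 K))
            _ = ε ^ K := one_mul _
        linarith
      · push_neg at hA
        apply Finset.sum_nonpos
        intro t _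
        by_cases htW : t ∈ OppSet R i ∩ Th i h
        · rw [Set.indicator_of_mem htW]
          have hp1 : pref i (out ζ i s t) (out ζ i sStar t) := hA t htW
          have hp2 : pref i (out ζ i sStar t) (out ζ i s t) := by
            by_contra hc
            exact hWD ⟨hA, t, htW, hp1, hc⟩
          have hule : u (out ζ i s t) ≤ u (out ζ i sStar t) := (hu_iff _ _).mpr hp2
          exact mul_nonpos_of_nonpos_of_nonneg (sub_nonpos.mpr hule) (hν0 t)
        · rw [Set.indicator_of_notMem htW]
    refine ⟨u, ?_, μ, ⟨?_, ?_, ?_, ?_, ?_⟩, ?_, ?_⟩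
    · -- originates
      intro z _ z' _
      exact hu_iff z z'
    · -- nonnegativity
      intro h t
      rw [hμAt h]
      by_cases hP : (OppSet R i ∩ Th i h).Nonempty
      · rw [hM_pos _ hP]
        by_cases htW : t ∈ OppSet R i ∩ Th i h
        · rw [Set.indicator_of_mem htW]
          exact div_nonneg (hν0 t) (le_of_lt (hcpos _ hP))
        · rw [Set.indicator_of_notMem htW]
      · rw [hM_neg _ hP]
        by_cases htW : t ∈ Th i h
        · rw [Set.indicator_of_mem htW]
          exact div_nonneg zero_le_one (le_of_lt (hupos _ (hTh i h)))
        · rw [Set.indicator_of_notMem htW]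
    · -- total mass one
      intro h
      have h0 : (∑ t : Opp S i, μ h t) = measOf (μ h) Set.univ := (measOf_univ (μ h)).symm
      rw [h0, hμAt h]
      by_cases hP : (OppSet R i ∩ Th i h).Nonempty
      · rw [hM_pos _ hP,
          measOf_restrict ν (measOf ν (OppSet R i ∩ Th i h)) (OppSet R i ∩ Th i h) Set.univ,
          Set.inter_univ]
        exact div_self (ne_of_gt (hcpos _ hP))
      · rw [hM_neg _ hP,
          measOf_restrict_one (measOf (fun _ => (1:ℝ)) (Th i h)) (Th i h) Set.univ,
          Set.inter_univ]
        exact div_self (ne_of_gt (hupos _ (hTh i h)))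
    · -- mass on the conditioning event
      intro h
      rw [hμAt h]
      by_cases hP : (OppSet R i ∩ Th i h).Nonempty
      · rw [hM_pos _ hP,
          measOf_restrict ν (measOf ν (OppSet R i ∩ Th i h)) (OppSet R i ∩ Th i h) (Th i h)]
        have he : (OppSet R i ∩ Th i h) ∩ Th i h = OppSet R i ∩ Th i h := by
          rw [Set.inter_assoc, Set.inter_self]
        rw [he]
        exact div_self (ne_of_gt (hcpos _ hP))
      · rw [hM_neg _ hP,
          measOf_restrict_one (measOf (fun _ => (1:ℝ)) (Th i h)) (Th i h) (Th i h),
          Set.inter_self]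
        exact div_self (ne_of_gt (hupos _ (hTh i h)))
    · -- dependence only on the conditioning event
      intro h h' hTT
      rw [hμAt h, hμAt h', hTT]
    · -- chain rule
      intro E h h' hE hsub
      rw [hμAt h, hμAt h']
      by_cases hP' : (OppSet R i ∩ Th i h').Nonempty
      · have hP : (OppSet R i ∩ Th i h).Nonempty :=
          hP'.mono (Set.inter_subset_inter_right _ hsub)
        rw [hM_pos _ hP, hM_pos _ hP',
          measOf_restrict ν (measOf ν (OppSet R i ∩ Th i h)) (OppSet R i ∩ Th i h) E,
          measOf_restrict ν (measOf ν (OppSet R i ∩ Th i h')) (OppSet R i ∩ Th i h') E,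
          measOf_restrict ν (measOf ν (OppSet R i ∩ Th i h)) (OppSet R i ∩ Th i h) (Th i h')]
        have e1 : (OppSet R i ∩ Th i h) ∩ E = OppSet R i ∩ E := by
          ext t
          simp only [Set.mem_inter_iff]
          exact ⟨fun ht => ⟨ht.1.1, ht.2⟩, fun ht => ⟨⟨ht.1, hsub (hE ht.2)⟩, ht.2⟩⟩
        have e2 : (OppSet R i ∩ Th i h') ∩ E = OppSet R i ∩ E := by
          ext t
          simp only [Set.mem_inter_iff]
          exact ⟨fun ht => ⟨ht.1.1, ht.2⟩, fun ht => ⟨⟨ht.1, hE ht.2⟩, ht.2⟩⟩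
        have e3 : (OppSet R i ∩ Th i h) ∩ Th i h' = OppSet R i ∩ Th i h' := by
          ext t
          simp only [Set.mem_inter_iff]
          exact ⟨fun ht => ⟨ht.1.1, ht.2⟩, fun ht => ⟨⟨ht.1, hsub ht.2⟩, ht.2⟩⟩
        rw [e1, e2, e3]
        have hc0 : measOf ν (OppSet R i ∩ Th i h) ≠ 0 := ne_of_gt (hcpos _ hP)
        have hc'0 : measOf ν (OppSet R i ∩ Th i h') ≠ 0 := ne_of_gt (hcpos _ hP')
        field_simp
      · by_cases hP : (OppSet R i ∩ Th i h).Nonempty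
        · rw [hM_pos _ hP,
            measOf_restrict ν (measOf ν (OppSet R i ∩ Th i h)) (OppSet R i ∩ Th i h) E,
            measOf_restrict ν (measOf ν (OppSet R i ∩ Th i h)) (OppSet R i ∩ Th i h) (Th i h')]
          have e1 : measOf ν ((OppSet R i ∩ Th i h) ∩ E) = 0 :=
            measOf_eq_zero _ (fun t ht => hP' ⟨t, ht.1.1, hE ht.2⟩)
          have e3 : measOf ν ((OppSet R i ∩ Th i h) ∩ Th i h') = 0 :=
            measOf_eq_zero _ (fun t ht => hP' ⟨t, ht.1.1, ht.2⟩)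
          rw [e1, e3, zero_div, mul_zero]
        · rw [hM_neg _ hP, hM_neg _ hP',
            measOf_restrict_one (measOf (fun _ => (1:ℝ)) (Th i h)) (Th i h) E,
            measOf_restrict_one (measOf (fun _ => (1:ℝ)) (Th i h')) (Th i h') E,
            measOf_restrict_one (measOf (fun _ => (1:ℝ)) (Th i h)) (Th i h) (Th i h')]
          have e1 : Th i h ∩ E = E :=
            Set.inter_eq_self_of_subset_right (fun t ht => hsub (hE ht))
          have e2 : Th i h' ∩ E = E := Set.inter_eq_self_of_subset_right hE
          have e3 : Th i h ∩ Th i h' = Th i h' := Set.inter_eq_self_of_subset_right hsub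
          rw [e1, e2, e3]
          have hu0 : measOf (fun _ => (1:ℝ)) (Th i h') ≠ 0 := ne_of_gt (hupos _ (hTh i h'))
          have hu1 : measOf (fun _ => (1:ℝ)) (Th i h) ≠ 0 := ne_of_gt (hupos _ (hTh i h))
          field_simp
    · -- full support on relevant conditional problems
      intro h hsh hne1 hne2
      rw [hμAt h, hM_pos _ hne2]
      ext t
      rw [Set.mem_setOf_eq]
      by_cases htW : t ∈ OppSet R i ∩ Th i h
      · rw [Set.indicator_of_mem htW]
        exact ⟨fun _ => htW, fun _ => div_pos (hνpos t htW.1) (hcpos _ hne2)⟩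
      · rw [Set.indicator_of_notMem htW]
        exact ⟨fun hc => absurd hc (lt_irrefl 0), fun hc => absurd hc htW⟩
    · -- optimality
      intro h hsh hne1 hne2 s hs
      rw [hμAt h, hM_pos _ hne2,
        exValue_restrict ζ i u ν (measOf ν (OppSet R i ∩ Th i h))
          (W := OppSet R i ∩ Th i h) (Q := OppSet R i) Set.inter_subset_left s,
        exValue_restrict ζ i u ν (measOf ν (OppSet R i ∩ Th i h))
          (W := OppSet R i ∩ Th i h) (Q := OppSet R i) Set.inter_subset_left sStar,
        div_le_div_iff₀ (hcpos _ hne2) (hcpos _ hne2)]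
      apply mul_le_mul_of_nonneg_right _ (le_of_lt (hcpos _ hne2))
      have hdiff := hkey h hsh hne1 hne2 s hs
      have hsplit : (∑ t : Opp S i, Set.indicator (OppSet R i ∩ Th i h)
            (fun t => (u (out ζ i s t) - u (out ζ i sStar t)) * ν t) t)
          = (∑ t : Opp S i, Set.indicator (OppSet R i ∩ Th i h)
              (fun t => u (out ζ i s t) * ν t) t)
            - (∑ t : Opp S i, Set.indicator (OppSet R i ∩ Th i h)
              (fun t => u (out ζ i sStar t) * ν t) t) := by
        rw [← Finset.sum_sub_distrib]
        refine Finset.sum_congr rfl fun t _ => ?_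
        by_cases htW : t ∈ OppSet R i ∩ Th i h
        · rw [Set.indicator_of_mem htW, Set.indicator_of_mem htW, Set.indicator_of_mem htW,
            sub_mul]
        · rw [Set.indicator_of_notMem htW, Set.indicator_of_notMem htW,
            Set.indicator_of_notMem htW, sub_zero]
      rw [hsplit] at hdiff
      linarith


end OrdinalGames

end ICBD
end

section
/- In a dynamic ordinal game in reduced form satisfying the replacement property: (i) for every k ∈ ℕ, the set 𝕌^k(S) produced by Iterative Conditional B-Dominance is nonempty, hence 𝕌^∞(S) ≠ ∅; (ii) there exists K ∈ ℕ such that 𝕌^K(S) = 𝕌^{K+1}(S) = 𝕌^∞(S) ≠ ∅. -/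
/-!
Fix an `ℕ`-valued utility representing `≿ᵢ` and rank the strategies in `R i` by their utility
vectors against the opponents' profiles in `R₋ᵢ`, compared lexicographically along a fixed
enumeration of those profiles. If `s` is conditionally B-dominated at `h`, it is not admissible
against the singleton formed by the first profile `t` of `R₋ᵢ(h)`, so some `x ∈ Rᵢ(h)` is
strictly better than `s` at `t`. The replacement property yields a strategy playing like `x` on
`R₋ᵢ(h)` and like `s` on the rest of `R₋ᵢ`; its utility vector agrees with that of `s` before `t`
and is larger at `t`. Hence a lexicographically best strategy survives, so `𝕌` maps restrictions
to restrictions, and the decreasing sequence `𝕌ᵏ(S)` stabilises in the finite lattice of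
restrictions.
-/

open scoped Classical

namespace ICBD

section OrdinalGames

variable {I : Type} [Fintype I] [DecidableEq I] [Nonempty I]
variable {S : I → Type} [∀ i, Fintype (S i)] [∀ i, DecidableEq (S i)] [∀ i, Nonempty (S i)]
variable {Z : Type} [Fintype Z]

variable (ζ : (∀ j, S j) → Z) (pref : I → Z → Z → Prop)

variable {H : I → Type} [∀ i, Fintype (H i)] [∀ i, Nonempty (H i)]
variable (Sh : ∀ i, H i → Set (S i)) (Th : ∀ i, H i → Set (Opp S i))

theorem exists_lex_potential (T β : Type*) [Fintype T] [LinearOrder β] :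
    ∃ Φ : (T → β) → Lex (Fin (Fintype.card T) → β), ∀ D : Set T, D.Nonempty →
      ∃ t ∈ D, ∀ f g : T → β, (∀ x ∉ D, f x = g x) → f t < g t → Φ f < Φ g := by
  let e := Fintype.equivFin T
  refine ⟨fun f => toLex (f ∘ e.symm), fun D hD => ?_⟩
  obtain ⟨t, htD, hmin⟩ := D.exists_min_image e D.toFinite hD
  refine ⟨t, htD, fun f g hfg hlt => ⟨e t, fun j hj => hfg _ fun hjD => ?_, by simpa using hlt⟩⟩
  exact (hmin _ hjD).not_gt (by simpa using hj)

theorem exists_nat_utility {Z : Type*} [Fintype Z] {p : Z → Z → Prop} (hrefl : ∀ x, p x x)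
    (htrans : ∀ x y z, p x y → p y z → p x z) :
    ∃ u : Z → ℕ, ∀ x y, p x y → ¬ p y x → u y < u x := by
  classical
  refine ⟨fun x => (Finset.univ.filter (p x)).card, fun x y hxy hyx => Finset.card_lt_card ?_⟩
  refine (Finset.ssubset_iff_of_subset fun w hw => ?_).2 ⟨x, ?_, ?_⟩ <;>
    simp_all [htrans _ _ _ hxy]

theorem Antitone.eq_iInf_of_stable {α : Type*} [CompleteLattice α] {f : ℕ → α}
    (hf : Antitone f) {K : ℕ} (hK : ∀ m, K ≤ m → f K = f m) : f K = ⨅ n, f n :=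
  le_antisymm (le_iInf fun n => (le_total n K).elim (hf ·) fun h => (hK n h).le) (iInf_le f K)

omit [Fintype I] [Nonempty I] [∀ i, Fintype (S i)] [∀ i, DecidableEq (S i)] [∀ i, Nonempty (S i)]
  [Fintype Z] [∀ i, Fintype (H i)] [∀ i, Nonempty (H i)] in
theorem CondBDom.exists_improvement (hrep : Replacement ζ Sh Th) {R : ∀ j, Set (S j)}
    (hR : IsRestriction R) {i : I} {s : S i} (hs : s ∈ R i)
    (hbd : CondBDom ζ pref Sh Th R i s) :
    ∃ h : H i, (OppSet R i ∩ Th i h).Nonempty ∧ ∀ t ∈ OppSet R i ∩ Th i h, ∃ s' ∈ R i,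
      (∀ t' ∈ OppSet R i \ (OppSet R i ∩ Th i h), out ζ i s' t' = out ζ i s t') ∧
      SPref pref i (out ζ i s' t) (out ζ i s t) := by
  obtain ⟨h, hsh, hRh, hTh, hB⟩ := hbd
  refine ⟨h, hTh, fun t ht => ?_⟩
  have hnadm := hB {t} (Set.singleton_subset_iff.2 ht) (Set.singleton_nonempty t)
  simp only [Admissible, not_and, not_forall, not_not] at hnadm
  obtain ⟨x, hx, -, _, rfl, hxt⟩ := hnadm ⟨hs, hsh⟩
  obtain ⟨s', hs', hin, hoff⟩ := hrep R hR i h hRh s ⟨hs, hsh⟩ x hx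
  exact ⟨s', hs'.1, hoff, hin _ ht ▸ hxt⟩

omit [Nonempty I] [∀ i, DecidableEq (S i)] [∀ i, Nonempty (S i)] [∀ i, Fintype (H i)]
  [∀ i, Nonempty (H i)] in
theorem isRestriction_Uop (hcomp : ∀ (i : I) (x y : Z), pref i x y ∨ pref i y x)
    (htrans : ∀ i : I, Transitive (pref i)) (hrep : Replacement ζ Sh Th)
    {R : ∀ j, Set (S j)} (hR : IsRestriction R) : IsRestriction (Uop ζ pref Sh Th R) := by
  intro i
  obtain ⟨u, hu⟩ := exists_nat_utility (fun x => (hcomp i x x).elim id id) (htrans i)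
  obtain ⟨Φ, hΦ⟩ := exists_lex_potential (OppSet R i) ℕ
  let score (s : S i) := Φ fun t => u (out ζ i s t)
  obtain ⟨s, hs, hmax⟩ := (R i).exists_max_image score (R i).toFinite (hR i)
  refine ⟨s, hs, fun hbd => ?_⟩
  obtain ⟨h, hne, himp⟩ := hbd.exists_improvement ζ pref Sh Th hrep hR hs
  have hD : {t : OppSet R i | t.1 ∈ Th i h}.Nonempty :=
    let ⟨t, ht⟩ := hne; ⟨⟨t, ht.1⟩, ht.2⟩
  obtain ⟨t, htD, ht⟩ := hΦ _ hD
  obtain ⟨s', hs', heq, hsp⟩ := himp t ⟨t.2, htD⟩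
  refine (hmax s' hs').not_gt (ht _ _ (fun x hx => ?_) (hu _ _ hsp.1 hsp.2))
  exact congrArg u (heq x ⟨x.2, fun hc => hx hc.2⟩).symm

omit [Nonempty I] [∀ i, DecidableEq (S i)] [∀ i, Fintype (H i)] [∀ i, Nonempty (H i)] in
theorem isRestriction_Uiter (hcomp : ∀ (i : I) (x y : Z), pref i x y ∨ pref i y x)
    (htrans : ∀ i : I, Transitive (pref i)) (hrep : Replacement ζ Sh Th) (k : ℕ) :
    IsRestriction (Uiter ζ pref Sh Th k) := by
  induction k with
  | zero => exact fun _ => Set.univ_nonempty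
  | succ k ih => exact isRestriction_Uop ζ pref Sh Th hcomp htrans hrep ih

omit [Fintype I] [Nonempty I] [∀ i, Fintype (S i)] [∀ i, DecidableEq (S i)] [∀ i, Nonempty (S i)]
  [Fintype Z] [∀ i, Fintype (H i)] [∀ i, Nonempty (H i)] in
theorem antitone_Uiter : Antitone (Uiter ζ pref Sh Th) :=
  antitone_nat_of_succ_le fun _ _ _ hs => hs.1

theorem ICBD_nonempty
    (hcomp : ∀ (i : I) (x y : Z), pref i x y ∨ pref i y x)
    (htrans : ∀ i : I, Transitive (pref i))
    (hrep : Replacement ζ Sh Th) :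
    (∀ (k : ℕ) (i : I), (Uiter ζ pref Sh Th k i).Nonempty) ∧
    (∀ i : I, (⋂ n : ℕ, Uiter ζ pref Sh Th n i).Nonempty) ∧
    ∃ K : ℕ, Uiter ζ pref Sh Th K = Uiter ζ pref Sh Th (K + 1) ∧
      (∀ i : I, Uiter ζ pref Sh Th K i = ⋂ n : ℕ, Uiter ζ pref Sh Th n i) ∧
      ∀ i : I, (Uiter ζ pref Sh Th K i).Nonempty := by
  have hne := isRestriction_Uiter ζ pref Sh Th hcomp htrans hrep
  obtain ⟨K, hK⟩ := WellFoundedLT.antitone_chain_condition (antitone_Uiter ζ pref Sh Th)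
  have hinter (i : I) : Uiter ζ pref Sh Th K i = ⋂ n, Uiter ζ pref Sh Th n i := by
    rw [Antitone.eq_iInf_of_stable (antitone_Uiter ζ pref Sh Th) hK, iInf_apply,
      Set.iInf_eq_iInter]
  exact ⟨hne, fun i => hinter i ▸ hne K i, K, hK (K + 1) K.le_succ, hinter, hne K⟩

end OrdinalGames

end ICBD
end

section
/- In a dynamic ordinal game in reduced form satisfying the replacement property, fix a profile u = (u_j)_{j∈I} of Bernoulli utility functions with u_j ∈ 𝒰_j for every j. Then for every restriction R, 𝕄(R)[u] ⊆ 𝕌(R); that is, every strategy that is not strictly dominated by a mixed strategy (given u_i) at any nonempty restricted conditional problem it allows is also not conditionally B-dominated with respect to R. -/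
/-!
A B-dominated strategy `s` has, on every nonempty set `Q` of opponents' profiles, a pure strategy
`a` weakly dominating it. By induction on `Q`, some mixed strategy `σ` strictly dominates `s` on
the ties `{t ∈ Q | u(a, t) ≤ u(s, t)}`, a proper subset of `Q`; the mixture `(1 - ε) a + ε σ`
then strictly dominates `s` on all of `Q` once `ε > 0` is small enough to preserve the strict
gains of `a` off the ties.
-/

open scoped Classical

namespace ICBD

section OrdinalGames

variable {I : Type} [Fintype I] [DecidableEq I] [Nonempty I]
variable {S : I → Type} [∀ i, Fintype (S i)] [∀ i, DecidableEq (S i)] [∀ i, Nonempty (S i)]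
variable {Z : Type} [Fintype Z]

variable (ζ : (∀ j, S j) → Z) (pref : I → Z → Z → Prop)

variable {H : I → Type} [∀ i, Fintype (H i)] [∀ i, Nonempty (H i)]
variable (Sh : ∀ i, H i → Set (S i)) (Th : ∀ i, H i → Set (Opp S i))

section MixedStrategies

open Filter Topology Function

variable {α β : Type*} [Fintype α]

def mixedOn (A : Set α) : Set (α → ℝ) := {σ ∈ stdSimplex ℝ α | support σ ⊆ A}

lemma convex_mixedOn (A : Set α) : Convex ℝ (mixedOn A) := by
  refine (convex_stdSimplex ℝ α).inter fun σ₁ hσ₁ σ₂ hσ₂ a b _ _ _ => ?_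
  exact (support_add _ _).trans <| Set.union_subset
    ((support_smul_subset_right _ _).trans hσ₁) ((support_smul_subset_right _ _).trans hσ₂)

lemma single_mem_mixedOn [DecidableEq α] {A : Set α} {a : α} (ha : a ∈ A) :
    Pi.single a 1 ∈ mixedOn A :=
  ⟨single_mem_stdSimplex ℝ a, Pi.support_single_subset.trans (Set.singleton_subset_iff.2 ha)⟩

lemma eventually_forall_lt_convexComb {Q : Set β} (hQ : Q.Finite) {a b c : β → ℝ}
    (hca : ∀ t ∈ Q, c t ≤ a t) (hcb : ∀ t ∈ Q, a t ≤ c t → c t < b t) :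
    ∀ᶠ ε in 𝓝[>] (0 : ℝ), ∀ t ∈ Q, c t < (1 - ε) * a t + ε * b t := by
  refine (eventually_all_finite hQ).2 fun t ht => ?_
  rcases (hca t ht).lt_or_eq with hlt | heq
  · have hcont : Continuous fun ε : ℝ => (1 - ε) * a t + ε * b t := by fun_prop
    exact ((hcont.tendsto' 0 (a t) (by simp)).mono_left nhdsWithin_le_nhds).eventually
      (lt_mem_nhds hlt)
  · filter_upwards [self_mem_nhdsWithin] with ε (hε : 0 < ε)
    have hbt := hcb t ht heq.ge
    rw [← heq]
    nlinarith

lemma exists_mixedOn_forall_lt_of_le_of_lt_on_ties {A : Set α} {Q : Set β} (hQ : Q.Finite)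
    {g : α → β → ℝ} {s : α} {σ₁ σ₂ : α → ℝ} (hσ₁ : σ₁ ∈ mixedOn A) (hσ₂ : σ₂ ∈ mixedOn A)
    (hle : ∀ t ∈ Q, g s t ≤ σ₁ ⬝ᵥ (g · t))
    (hlt : ∀ t ∈ Q, σ₁ ⬝ᵥ (g · t) ≤ g s t → g s t < σ₂ ⬝ᵥ (g · t)) :
    ∃ σ ∈ mixedOn A, ∀ t ∈ Q, g s t < σ ⬝ᵥ (g · t) := by
  obtain ⟨ε, hgain, hε₀, hε₁⟩ := ((eventually_forall_lt_convexComb hQ hle hlt).and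
    (Ioo_mem_nhdsGT one_pos)).exists
  refine ⟨(1 - ε) • σ₁ + ε • σ₂,
    convex_mixedOn A hσ₁ hσ₂ (by linarith) hε₀.le (by ring), fun t ht => ?_⟩
  simpa only [add_dotProduct, smul_dotProduct, smul_eq_mul] using hgain t ht

theorem exists_mixedOn_forall_lt_of_forall_weakDom [Finite β] {A : Set α} {g : α → β → ℝ}
    {s : α} {Q : Set β}
    (hdom : ∀ Q' ⊆ Q, Q'.Nonempty →
      ∃ a ∈ A, (∀ t ∈ Q', g s t ≤ g a t) ∧ ∃ t ∈ Q', g s t < g a t)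
    (hQ : Q.Nonempty) :
    ∃ σ ∈ mixedOn A, ∀ t ∈ Q, g s t < σ ⬝ᵥ (g · t) := by
  induction Q using WellFoundedLT.induction with
  | ind Q ih =>
  obtain ⟨a, ha, hle, t₀, ht₀, hlt₀⟩ := hdom Q subset_rfl hQ
  set ties := {t ∈ Q | g a t ≤ g s t}
  have hties : ties ⊆ Q := Set.sep_subset _ _
  obtain ⟨σ₂, hσ₂, hlt⟩ : ∃ σ₂ ∈ mixedOn A, ∀ t ∈ ties, g s t < σ₂ ⬝ᵥ (g · t) := by
    rcases ties.eq_empty_or_nonempty with hempty | hne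
    · exact ⟨_, single_mem_mixedOn ha, by simp [hempty]⟩
    · exact ih ties (ssubset_of_subset_not_subset hties fun h => (h ht₀).2.not_gt hlt₀)
        (fun Q' hQ' => hdom Q' (hQ'.trans hties)) hne
  refine exists_mixedOn_forall_lt_of_le_of_lt_on_ties (Set.toFinite Q) (single_mem_mixedOn ha) hσ₂
    ?_ ?_
  · simpa only [single_one_dotProduct] using hle
  · simp only [single_one_dotProduct]
    exact fun t ht htie => hlt t ⟨ht, htie⟩

end MixedStrategies

omit [Fintype I] [DecidableEq I] [Nonempty I] [Fintype Z] in
lemma Bernoulli.sPref_iff {i : I} {u : Z → ℝ} (hu : Bernoulli pref i u) {x y : Z} :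
    SPref pref i x y ↔ u y < u x := by
  rw [SPref, ← hu, ← hu, lt_iff_le_not_ge]

omit [Fintype I] [Nonempty I] [Fintype Z] [∀ i, Fintype (S i)] [∀ i, DecidableEq (S i)]
  [∀ i, Nonempty (S i)] in
lemma Bernoulli.weakDom_iff {i : I} {u : Z → ℝ} (hu : Bernoulli pref i u) {Q : Set (Opp S i)}
    {s' s : S i} :
    WeakDom ζ pref i Q s' s ↔ (∀ t ∈ Q, u (out ζ i s t) ≤ u (out ζ i s' t)) ∧
      ∃ t ∈ Q, u (out ζ i s t) < u (out ζ i s' t) := by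
  simp only [WeakDom, hu.sPref_iff]
  exact and_congr (forall₂_congr fun _ _ => (hu _ _).symm) Iff.rfl

omit [Nonempty I] [∀ i, DecidableEq (S i)] [∀ i, Nonempty (S i)] [Fintype Z] in
theorem mixedStrictDom_of_bDom {i : I} {u : Z → ℝ} (hu : Bernoulli pref i u) {Ri : Set (S i)}
    {Q : Set (Opp S i)} {s : S i} (hs : s ∈ Ri) (hQ : Q.Nonempty)
    (hbd : BDom ζ pref i Ri Q s) : MixedStrictDom ζ i Ri Q u s := by
  obtain ⟨σ, ⟨⟨hσ₀, hσ₁⟩, hσRi⟩, hlt⟩ := exists_mixedOn_forall_lt_of_forall_weakDom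
    (A := Ri) (g := fun a t => u (out ζ i a t)) (fun Q' hQ' hne => by
      by_contra hnone
      exact hbd Q' hQ' hne ⟨hs, fun s' hs' hw => hnone ⟨s', hs', (hu.weakDom_iff ζ).1 hw⟩⟩) hQ
  exact ⟨σ, ⟨hσ₀, hσ₁, hσRi⟩, hlt⟩

theorem Mop_subset_Uop
    (u : I → Z → ℝ) (hu : ∀ j : I, Bernoulli pref j (u j))
    (R : ∀ j, Set (S j)) :
    ∀ j : I, Mop ζ Sh Th u R j ⊆ Uop ζ pref Sh Th R j := by
  rintro j s ⟨hsR, hM⟩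
  refine ⟨hsR, fun ⟨h, hsh, hRh, hQ, hbd⟩ => ?_⟩
  exact hM h hsh hRh hQ (mixedStrictDom_of_bDom ζ pref (hu j) ⟨hsR, hsh⟩ hQ hbd)

end OrdinalGames

end ICBD
end

section
/- In a dynamic ordinal game in reduced form satisfying the replacement property, for every restriction R and every player i ∈ I: 𝕌_i(R) = ⋃_{u_i ∈ 𝒰_i} 𝕄_i(R)[u_i]; that is, a strategy s_i ∈ R_i is not conditionally B-dominated with respect to R if and only if there exists a Bernoulli utility function u_i ∈ 𝒰_i such that for every h ∈ H_i(s_i) with R^i(h) nonempty, s_i is not strictly dominated relative to R^i(h) by any mixed strategy (given u_i). -/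
open scoped Classical

namespace ICBD

section OrdinalGames

variable {I : Type} [Fintype I] [DecidableEq I] [Nonempty I]
variable {S : I → Type} [∀ i, Fintype (S i)] [∀ i, DecidableEq (S i)] [∀ i, Nonempty (S i)]
variable {Z : Type} [Fintype Z]

variable (ζ : (∀ j, S j) → Z) (pref : I → Z → Z → Prop)

variable {H : I → Type} [∀ i, Fintype (H i)] [∀ i, Nonempty (H i)]
variable (Sh : ∀ i, H i → Set (S i)) (Th : ∀ i, H i → Set (Opp S i))

/-! ### Auxiliary: a steep Bernoulli utility -/

/-- Rank of an outcome: the number of outcomes weakly below it. -/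
noncomputable def rankZ (i : I) (z : Z) : ℕ :=
  (Finset.univ.filter fun z' => pref i z z').card

/-- A steep utility function. -/
noncomputable def usteep (m : ℕ) (i : I) (z : Z) : ℝ :=
  -(((m : ℝ) + 1) ^ (Fintype.card Z - rankZ pref i z))

lemma usteep_neg (m : ℕ) (i : I) (z : Z) : usteep pref m i z < 0 := by
  have : (0:ℝ) < ((m : ℝ) + 1) ^ (Fintype.card Z - rankZ pref i z) := by positivity
  simp only [usteep]; linarith

lemma rankZ_le_card (i : I) (z : Z) : rankZ pref i z ≤ Fintype.card Z := by
  classical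
  simpa [rankZ, ← Finset.card_univ] using
    Finset.card_filter_le Finset.univ (fun z' => pref i z z')

lemma rankZ_le_of_pref (i : I) (ht : Transitive (pref i)) {z z' : Z} (h : pref i z z') :
    rankZ pref i z' ≤ rankZ pref i z := by
  apply Finset.card_le_card
  intro w hw
  simp only [Finset.mem_filter, Finset.mem_univ, true_and] at hw ⊢
  exact ht h hw

lemma rankZ_lt_of_spref (i : I)
    (hc : ∀ x y : Z, pref i x y ∨ pref i y x) (ht : Transitive (pref i))
    {z z' : Z} (h : pref i z z') (h2 : ¬ pref i z' z) :
    rankZ pref i z' < rankZ pref i z := by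
  apply Finset.card_lt_card
  refine (Finset.ssubset_iff_of_subset ?_).mpr ⟨z, ?_, ?_⟩
  · intro w hw
    simp only [Finset.mem_filter, Finset.mem_univ, true_and] at hw ⊢
    exact ht h hw
  · simp only [Finset.mem_filter, Finset.mem_univ, true_and]
    exact (hc z z).elim id id
  · simp only [Finset.mem_filter, Finset.mem_univ, true_and]
    exact h2

lemma bernoulli_usteep (i : I) (m : ℕ) (hm : 1 ≤ m)
    (hc : ∀ x y : Z, pref i x y ∨ pref i y x) (ht : Transitive (pref i)) :
    Bernoulli pref i (usteep pref m i) := by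
  intro z z'
  constructor
  · intro hle
    by_contra hnp
    have hp : pref i z' z := (hc z z').resolve_left hnp
    have hlt : rankZ pref i z < rankZ pref i z' := rankZ_lt_of_spref pref i hc ht hp hnp
    have hexp : Fintype.card Z - rankZ pref i z' < Fintype.card Z - rankZ pref i z :=
      Nat.sub_lt_sub_left (lt_of_lt_of_le hlt (rankZ_le_card pref i z')) hlt
    have : usteep pref m i z < usteep pref m i z' := by
      simp only [usteep, neg_lt_neg_iff]
      have hm' : (1:ℝ) ≤ (m:ℝ) := by exact_mod_cast hm
      exact pow_lt_pow_right₀ (by linarith) hexp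
    linarith
  · intro hp
    have hr : rankZ pref i z' ≤ rankZ pref i z := rankZ_le_of_pref pref i ht hp
    simp only [usteep, neg_le_neg_iff]
    exact pow_le_pow_right₀ (by push_cast; linarith [Nat.cast_nonneg (α := ℝ) m])
      (Nat.sub_le_sub_left hr _)

lemma usteep_gap (i : I) (m : ℕ)
    (hc : ∀ x y : Z, pref i x y ∨ pref i y x) (ht : Transitive (pref i))
    {z z' : Z} (h : pref i z z') (h2 : ¬ pref i z' z) :
    (m : ℝ) * (-(usteep pref m i z)) ≤ usteep pref m i z - usteep pref m i z' := by
  have hlt : rankZ pref i z' < rankZ pref i z := rankZ_lt_of_spref pref i hc ht h h2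
  set a := Fintype.card Z - rankZ pref i z with ha
  set b := Fintype.card Z - rankZ pref i z' with hb
  have hab : a + 1 ≤ b := by
    have h1 : a < b :=
      Nat.sub_lt_sub_left (lt_of_lt_of_le hlt (rankZ_le_card pref i z)) hlt
    omega
  have h1 : ((m:ℝ)+1) ^ (a+1) ≤ ((m:ℝ)+1) ^ b :=
    pow_le_pow_right₀ (by linarith [Nat.cast_nonneg (α := ℝ) m]) hab
  have h2' : ((m:ℝ)+1) ^ (a+1) = ((m:ℝ)+1) ^ a * ((m:ℝ)+1) := pow_succ _ _
  simp only [usteep, ← ha, ← hb, neg_neg]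
  nlinarith [h1, h2']

/-! ### Admissibility implies no strict mixed dominance for the steep utility -/

lemma not_mixedDom_of_admissible {i : I}
    (hc : ∀ x y : Z, pref i x y ∨ pref i y x) (ht : Transitive (pref i))
    (R' : Set (S i)) (Q' : Set (Opp S i)) (hQ' : Q'.Nonempty) (s : S i)
    (hadm : Admissible ζ pref i R' Q' s) :
    ¬ MixedStrictDom ζ i R' Q' (usteep pref (Fintype.card (S i)) i) s := by
  classical
  rintro ⟨σ, ⟨hσ0, hσ1, hσsupp⟩, hdom⟩
  set m := Fintype.card (S i) with hm
  set u := usteep pref m i with hu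
  have hB : Bernoulli pref i u := bernoulli_usteep pref i m Fintype.card_pos hc ht
  -- dichotomy from admissibility
  have hdich : ∀ s' ∈ R', (∃ t ∈ Q', u (out ζ i s' t) < u (out ζ i s t)) ∨
      (∀ t ∈ Q', u (out ζ i s' t) = u (out ζ i s t)) := by
    intro s' hs'
    by_cases hb : ∃ t ∈ Q', u (out ζ i s' t) < u (out ζ i s t)
    · exact Or.inl hb
    · push_neg at hb
      right
      intro t htQ
      by_contra hne
      have hlt : u (out ζ i s t) < u (out ζ i s' t) := lt_of_le_of_ne (hb t htQ) (Ne.symm hne)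
      refine hadm.2 s' hs' ⟨fun t' ht' => (hB _ _).mp (hb t' ht'), t, htQ, ?_, ?_⟩
      · exact (hB _ _).mp (hb t htQ)
      · intro hpp
        exact absurd ((hB _ _).mpr hpp) (not_le.mpr hlt)
    -- the set of "bad" strategies
  set Badf : Finset (S i) :=
    Finset.univ.filter
      (fun s' => σ s' ≠ 0 ∧ ∃ t ∈ Q', u (out ζ i s' t) < u (out ζ i s t)) with hBadf
  obtain ⟨t₁, ht₁⟩ := hQ'
  have hBadne : Badf.Nonempty := by
    rw [Finset.nonempty_iff_ne_empty]
    intro hemp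
    have hdom1 := hdom t₁ ht₁
    have heq : ∑ s' : S i, σ s' * u (out ζ i s' t₁) = ∑ s' : S i, σ s' * u (out ζ i s t₁) := by
      apply Finset.sum_congr rfl
      intro s' _
      by_cases hz : σ s' = 0
      · simp [hz]
      · rcases hdich s' (hσsupp s' hz) with hbad | heqv
        · exfalso
          have hmem : s' ∈ Badf := by
            rw [hBadf]
            simp only [Finset.mem_filter, Finset.mem_univ, true_and]
            exact ⟨hz, hbad⟩
          rw [hemp] at hmem
          exact absurd hmem (Finset.notMem_empty s')
        · rw [heqv t₁ ht₁]
    rw [heq, ← Finset.sum_mul, hσ1, one_mul] at hdom1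
    exact lt_irrefl _ hdom1
  obtain ⟨sm, hsmB, hsmax⟩ := Finset.exists_max_image Badf σ hBadne
  have hsm' : σ sm ≠ 0 ∧ ∃ t ∈ Q', u (out ζ i sm t) < u (out ζ i s t) := by
    have := hsmB
    rw [hBadf, Finset.mem_filter] at this
    exact this.2
  obtain ⟨hσsm, t₀, ht₀, hsmW⟩ := hsm'
  set u₀ := u (out ζ i s t₀) with hu₀
  have hu₀neg : u₀ < 0 := usteep_neg pref m i _
  -- pointwise bound
  have hpoint : ∀ s' : S i,
      σ s' * u (out ζ i s' t₀) - σ s' * u₀ ≤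
        (if u₀ < u (out ζ i s' t₀) then σ s' else 0) * (-u₀)
          - (if u (out ζ i s' t₀) < u₀ then σ s' else 0) * ((m:ℝ) * (-u₀)) := by
    intro s'
    by_cases h1 : u₀ < u (out ζ i s' t₀)
    · have h2 : ¬ (u (out ζ i s' t₀) < u₀) := by linarith
      rw [if_pos h1, if_neg h2]
      have hneg : u (out ζ i s' t₀) < 0 := usteep_neg pref m i _
      have hσn := hσ0 s'
      nlinarith
    · by_cases h2 : u (out ζ i s' t₀) < u₀
      · rw [if_neg h1, if_pos h2]
        have hpr : pref i (out ζ i s t₀) (out ζ i s' t₀) := (hB _ _).mp h2.le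
        have hnpr : ¬ pref i (out ζ i s' t₀) (out ζ i s t₀) := fun hpp =>
          absurd ((hB _ _).mpr hpp) (not_le.mpr h2)
        have hgap := usteep_gap pref i m hc ht hpr hnpr
        have hσn := hσ0 s'
        nlinarith
      · have heq0 : u (out ζ i s' t₀) = u₀ := le_antisymm (not_lt.mp h1) (not_lt.mp h2)
        rw [if_neg h1, if_neg h2, heq0]
        simp
  set bB := ∑ s' : S i, (if u₀ < u (out ζ i s' t₀) then σ s' else 0) with hbB
  set wW := ∑ s' : S i, (if u (out ζ i s' t₀) < u₀ then σ s' else 0) with hwW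
  have hsum : 0 < bB * (-u₀) - wW * ((m:ℝ) * (-u₀)) := by
    have hA : 0 < ∑ s' : S i, (σ s' * u (out ζ i s' t₀) - σ s' * u₀) := by
      rw [Finset.sum_sub_distrib, ← Finset.sum_mul, hσ1, one_mul]
      have := hdom t₀ ht₀
      linarith
    have hC : ∑ s' : S i, (σ s' * u (out ζ i s' t₀) - σ s' * u₀) ≤
        bB * (-u₀) - wW * ((m:ℝ) * (-u₀)) := by
      rw [hbB, hwW, Finset.sum_mul, Finset.sum_mul, ← Finset.sum_sub_distrib]
      exact Finset.sum_le_sum (fun s' _ => hpoint s')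
    linarith
  have h3 : σ sm ≤ wW := by
    rw [hwW]
    have hterm : (if u (out ζ i sm t₀) < u₀ then σ sm else 0) = σ sm := if_pos hsmW
    calc σ sm = (if u (out ζ i sm t₀) < u₀ then σ sm else 0) := hterm.symm
      _ ≤ _ := Finset.single_le_sum
          (f := fun s' => if u (out ζ i s' t₀) < u₀ then σ s' else 0)
          (fun s' _ => by by_cases hh : u (out ζ i s' t₀) < u₀ <;> simp [hh, hσ0 s'])
          (Finset.mem_univ sm)
  have h4 : bB ≤ (m:ℝ) * σ sm := by
    have hb1 : bB ≤ ∑ s' : S i, (if s' ∈ Badf then σ s' else 0) := by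
      rw [hbB]
      apply Finset.sum_le_sum
      intro s' _
      by_cases h1 : u₀ < u (out ζ i s' t₀)
      · rw [if_pos h1]
        by_cases hz : σ s' = 0
        · rw [hz]
          by_cases hh : s' ∈ Badf <;> simp [hh, hσ0 s']
        · have hmem : s' ∈ Badf := by
            rcases hdich s' (hσsupp s' hz) with hbad | heqv
            · rw [hBadf]
              simp only [Finset.mem_filter, Finset.mem_univ, true_and]
              exact ⟨hz, hbad⟩
            · exfalso
              rw [heqv t₀ ht₀] at h1
              exact lt_irrefl _ h1
          rw [if_pos hmem]
      · rw [if_neg h1]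
        by_cases hh : s' ∈ Badf <;> simp [hh, hσ0 s']
    have hb2 : ∑ s' : S i, (if s' ∈ Badf then σ s' else 0) = ∑ s' ∈ Badf, σ s' := by
      rw [Finset.sum_ite_mem, Finset.univ_inter]
    have hb3 : ∑ s' ∈ Badf, σ s' ≤ Badf.card • σ sm :=
      Finset.sum_le_card_nsmul _ _ _ (fun x hx => hsmax x hx)
    have hb4 : (Badf.card : ℝ) * σ sm ≤ (m:ℝ) * σ sm := by
      apply mul_le_mul_of_nonneg_right _ (hσ0 sm)
      have : Badf.card ≤ m := le_of_le_of_eq (Finset.card_le_univ _) Finset.card_univ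
      exact_mod_cast this
    rw [nsmul_eq_mul] at hb3
    linarith
  have hmu : (0:ℝ) < -u₀ := by linarith
  have e1 : bB * (-u₀) ≤ ((m:ℝ) * σ sm) * (-u₀) := mul_le_mul_of_nonneg_right h4 hmu.le
  have e2 : σ sm * ((m:ℝ) * (-u₀)) ≤ wW * ((m:ℝ) * (-u₀)) := by
    apply mul_le_mul_of_nonneg_right h3
    positivity
  nlinarith [hsum, e1, e2]

/-! ### No strict mixed dominance implies admissibility on a subset -/

lemma exists_adm_subset {i : I} (u : Z → ℝ) (hu : Bernoulli pref i u)
    (R' : Set (S i)) (Q : Set (Opp S i)) (s : S i) (hs : s ∈ R')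
    (hnd : ¬ MixedStrictDom ζ i R' Q u s) :
    ∃ Q'' : Set (Opp S i), Q'' ⊆ Q ∧ Q''.Nonempty ∧ Admissible ζ pref i R' Q'' s := by
  classical
  set D : Set (Opp S i → ℝ) := {x | ∃ σ : S i → ℝ, IsMixedOn i R' σ ∧
    x = fun t => (∑ s' : S i, σ s' * u (out ζ i s' t)) - u (out ζ i s t)} with hD
  set O : Set (Opp S i → ℝ) := {x | ∀ t ∈ Q, 0 < x t} with hO
  -- payoff vector of a pure strategy
  have hpure : ∀ s' ∈ R',
      (fun t => u (out ζ i s' t) - u (out ζ i s t)) ∈ D := by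
    intro s' hs'
    refine ⟨fun x => if x = s' then 1 else 0, ⟨?_, ?_, ?_⟩, ?_⟩
    · intro x; by_cases hx : x = s' <;> simp [hx]
    · simp
    · intro x hx
      by_cases hxx : x = s'
      · rw [hxx]; exact hs'
      · simp [hxx] at hx
    · funext t
      simp [ite_mul]
  have hOopen : IsOpen O := by
    have : O = ⋂ t ∈ Q, {x : Opp S i → ℝ | 0 < x t} := by
      ext x; simp [hO, Set.mem_iInter]
    rw [this]
    exact (Set.toFinite Q).isOpen_biInter
      (fun t _ => isOpen_lt continuous_const (continuous_apply t))
  have hOconv : Convex ℝ O := by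
    intro x hx y hy a b ha hb hab
    intro t ht
    have hxt := hx t ht
    have hyt := hy t ht
    show 0 < a * x t + b * y t
    rcases eq_or_lt_of_le ha with h0 | h0
    · have hb1 : b = 1 := by linarith
      rw [← h0, hb1]; simpa using hyt
    · have : 0 ≤ b * y t := mul_nonneg hb hyt.le
      nlinarith
  have hDconv : Convex ℝ D := by
    rintro x ⟨σ₁, ⟨hn1, hs1, hsupp1⟩, rfl⟩ y ⟨σ₂, ⟨hn2, hs2, hsupp2⟩, rfl⟩ a b ha hb hab
    refine ⟨fun s' => a * σ₁ s' + b * σ₂ s', ⟨?_, ?_, ?_⟩, ?_⟩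
    · intro s'
      show 0 ≤ a * σ₁ s' + b * σ₂ s'
      have := mul_nonneg ha (hn1 s')
      have := mul_nonneg hb (hn2 s')
      linarith
    · show ∑ s' : S i, (a * σ₁ s' + b * σ₂ s') = 1
      rw [Finset.sum_add_distrib, ← Finset.mul_sum, ← Finset.mul_sum, hs1, hs2]
      simpa using hab
    · intro s' hne
      have hne' : a * σ₁ s' + b * σ₂ s' ≠ 0 := hne
      by_cases h1 : σ₁ s' = 0
      · by_cases h2 : σ₂ s' = 0
        · exfalso; apply hne'; rw [h1, h2]; ring
        · exact hsupp2 s' h2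
      · exact hsupp1 s' h1
    · funext t
      have hsplit : ∑ s' : S i, (a * σ₁ s' + b * σ₂ s') * u (out ζ i s' t)
          = a * (∑ s' : S i, σ₁ s' * u (out ζ i s' t))
            + b * (∑ s' : S i, σ₂ s' * u (out ζ i s' t)) := by
        rw [Finset.mul_sum, Finset.mul_sum, ← Finset.sum_add_distrib]
        apply Finset.sum_congr rfl
        intro s' _
        ring
      show a * ((∑ s' : S i, σ₁ s' * u (out ζ i s' t)) - u (out ζ i s t))
          + b * ((∑ s' : S i, σ₂ s' * u (out ζ i s' t)) - u (out ζ i s t))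
          = _
      rw [hsplit]
      linear_combination (-(u (out ζ i s t))) * hab
  have hdisj : Disjoint O D := by
    rw [Set.disjoint_left]
    rintro x hxO ⟨σ, hσ, rfl⟩
    exact hnd ⟨σ, hσ, fun t ht => sub_pos.mp (hxO t ht)⟩
  obtain ⟨f, α, hOf, hDf⟩ := geometric_hahn_banach_open hOconv hOopen hDconv hdisj
  -- basis vectors
  set e : Opp S i → (Opp S i → ℝ) := fun t => fun j => if t = j then 1 else 0 with he
  set c : Opp S i → ℝ := fun _ => (1:ℝ) with hcdef
  have hcO : c ∈ O := fun t _ => one_pos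
  have hfc : f c < α := hOf c hcO
  have hexpand : ∀ x : Opp S i → ℝ, f x = ∑ t : Opp S i, x t * f (e t) := by
    intro x
    conv_lhs => rw [pi_eq_sum_univ x]
    rw [map_sum]
    apply Finset.sum_congr rfl
    intro t _
    rw [map_smul, smul_eq_mul]
  -- 0 ∈ D hence α ≤ 0
  have h0D : (0 : Opp S i → ℝ) ∈ D := by
    have := hpure s hs
    simp only [sub_self] at this
    exact this
  have hα0 : α ≤ 0 := by simpa using hDf 0 h0D
  -- α ≥ 0
  have hα0' : 0 ≤ α := by
    by_contra hneg
    push_neg at hneg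
    have hfcneg : f c < 0 := lt_trans hfc hneg
    have hε : 0 < α / (2 * f c) := div_pos_of_neg_of_neg (by linarith) (by linarith)
    have hmem : (α / (2 * f c)) • c ∈ O := by
      intro t _
      show 0 < (α / (2 * f c)) * c t
      rw [hcdef]
      simpa using hε
    have hs2 : f ((α / (2 * f c)) • c) < α := hOf _ hmem
    rw [map_smul, smul_eq_mul] at hs2
    have hfc0 : f c ≠ 0 := ne_of_lt hfcneg
    have heqq : (α / (2 * f c)) * f c = α / 2 := by
      field_simp
    rw [heqq] at hs2
    linarith
  have hα : α = 0 := le_antisymm hα0 hα0'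
  -- coordinates of the functional are nonpositive
  have hfet_le : ∀ t : Opp S i, f (e t) ≤ 0 := by
    intro t
    by_contra hpos
    push_neg at hpos
    set lam := (α - f c) / f (e t) + 1 with hlam
    have hlam0 : 0 < lam := by
      have h9 : 0 < (α - f c) / f (e t) := div_pos (by linarith) hpos
      rw [hlam]
      linarith
    have hmem : c + lam • e t ∈ O := by
      intro j _
      show (0:ℝ) < 1 + lam * (if t = j then 1 else 0)
      by_cases hj : t = j
      · rw [if_pos hj, mul_one]
        linarith
      · rw [if_neg hj, mul_zero]
        linarith
    have hlt := hOf _ hmem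
    rw [map_add, map_smul, smul_eq_mul, hlam] at hlt
    have hne : f (e t) ≠ 0 := ne_of_gt hpos
    rw [add_mul, div_mul_cancel₀ _ hne, one_mul] at hlt
    linarith
  -- coordinates vanish off Q
  have hfet_zero : ∀ t : Opp S i, t ∉ Q → f (e t) = 0 := by
    intro t htQ
    rcases lt_or_eq_of_le (hfet_le t) with hneg | h0
    · exfalso
      set lam := (α - f c) / f (e t) - 1 with hlam
      have hmem : c + lam • e t ∈ O := by
        intro j hj
        have hjt : ¬ (t = j) := fun hh => htQ (hh ▸ hj)
        show (0:ℝ) < 1 + lam * (if t = j then 1 else 0)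
        rw [if_neg hjt, mul_zero]
        linarith
      have hlt := hOf _ hmem
      rw [map_add, map_smul, smul_eq_mul, hlam] at hlt
      have hne : f (e t) ≠ 0 := ne_of_lt hneg
      rw [sub_mul, div_mul_cancel₀ _ hne, one_mul] at hlt
      linarith
    · exact h0
  set p : Opp S i → ℝ := fun t => -f (e t) with hp
  have hp0 : ∀ t, 0 ≤ p t := fun t => neg_nonneg.mpr (hfet_le t)
  -- the key inequality
  have hkey : ∀ s' ∈ R', ∑ t : Opp S i, p t * u (out ζ i s' t)
      ≤ ∑ t : Opp S i, p t * u (out ζ i s t) := by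
    intro s' hs'
    have hd := hDf _ (hpure s' hs')
    rw [hexpand, hα] at hd
    have h1 : ∑ t : Opp S i,
          (fun t => u (out ζ i s' t) - u (out ζ i s t)) t * f (e t)
        = ∑ t : Opp S i, (p t * u (out ζ i s t) - p t * u (out ζ i s' t)) := by
      apply Finset.sum_congr rfl
      intro t _
      show (u (out ζ i s' t) - u (out ζ i s t)) * f (e t)
        = p t * u (out ζ i s t) - p t * u (out ζ i s' t)
      have hpt : p t = -f (e t) := rfl
      rw [hpt]
      ring
    rw [h1, Finset.sum_sub_distrib] at hd
    linarith
  -- some coordinate is positive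
  have hptot : ∃ t, 0 < p t := by
    by_contra hno
    push_neg at hno
    have hcz : f c = 0 := by
      rw [hexpand c]
      apply Finset.sum_eq_zero
      intro t _
      have h1 : p t = 0 := le_antisymm (hno t) (hp0 t)
      have h2 : f (e t) = 0 := by
        have h1' : -f (e t) = 0 := h1
        linarith
      rw [h2, mul_zero]
    rw [hα, hcz] at hfc
    exact lt_irrefl _ hfc
  obtain ⟨tp, htp⟩ := hptot
  refine ⟨{t | 0 < p t}, ?_, ⟨tp, htp⟩, hs, ?_⟩
  · intro t ht
    by_contra htQ
    have h2 : f (e t) = 0 := hfet_zero t htQ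
    have : p t = 0 := by
      have hpt : p t = -f (e t) := rfl
      rw [hpt, h2, neg_zero]
    have ht' : 0 < p t := ht
    rw [this] at ht'
    exact lt_irrefl _ ht'
  · rintro s' hs' ⟨hall, t₀, ht₀, hsp⟩
    have hles : ∀ t, 0 < p t → u (out ζ i s t) ≤ u (out ζ i s' t) :=
      fun t ht => (hu _ _).mpr (hall t ht)
    have hstrict : u (out ζ i s t₀) < u (out ζ i s' t₀) := by
      have h2 : ¬ u (out ζ i s' t₀) ≤ u (out ζ i s t₀) :=
        fun hh => hsp.2 ((hu _ _).mp hh)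
      exact not_le.mp h2
    have hlt : ∑ t : Opp S i, p t * u (out ζ i s t)
        < ∑ t : Opp S i, p t * u (out ζ i s' t) := by
      apply Finset.sum_lt_sum
      · intro t _
        by_cases htp' : 0 < p t
        · exact mul_le_mul_of_nonneg_left (hles t htp') (hp0 t)
        · have hz : p t = 0 := le_antisymm (not_lt.mp htp') (hp0 t)
          rw [hz]
          simp
      · exact ⟨t₀, Finset.mem_univ _, mul_lt_mul_of_pos_left hstrict ht₀⟩
    exact absurd (hkey s' hs') (not_le.mpr hlt)
theorem Uop_eq_iUnion_Mopi
    (hcomp : ∀ (i : I) (x y : Z), pref i x y ∨ pref i y x)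
    (htrans : ∀ i : I, Transitive (pref i))
    (hSh : ∀ (i : I) (h : H i), (Sh i h).Nonempty)
    (hTh : ∀ (i : I) (h : H i), (Th i h).Nonempty)
    (hrep : Replacement ζ Sh Th)
    (R : ∀ j, Set (S j)) (hR : IsRestriction R) (i : I) :
    Uop ζ pref Sh Th R i
      = ⋃ u ∈ {u : Z → ℝ | Bernoulli pref i u}, Mopi ζ Sh Th i u R := by
  ext s
  constructor
  · rintro ⟨hsR, hncbd⟩
    have hbern : Bernoulli pref i (usteep pref (Fintype.card (S i)) i) :=
      bernoulli_usteep pref i (Fintype.card (S i)) Fintype.card_pos (hcomp i) (htrans i)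
    have hmem : s ∈ Mopi ζ Sh Th i (usteep pref (Fintype.card (S i)) i) R := by
      refine ⟨hsR, ?_⟩
      intro h hsh hR' hQ
      have hnb : ¬ BDom ζ pref i (R i ∩ Sh i h) (OppSet R i ∩ Th i h) s := by
        intro hb
        exact hncbd ⟨h, hsh, hR', hQ, hb⟩
      simp only [BDom, not_forall, not_not] at hnb
      obtain ⟨Q', hQ'sub, hQ'ne, hadm⟩ := hnb
      rintro ⟨σ, hσ, hd⟩
      exact not_mixedDom_of_admissible ζ pref (hcomp i) (htrans i) _ Q' hQ'ne s hadm
        ⟨σ, hσ, fun t ht => hd t (hQ'sub ht)⟩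
    exact Set.mem_biUnion hbern hmem
  · intro hmem
    rw [Set.mem_iUnion₂] at hmem
    obtain ⟨u, hu, hM⟩ := hmem
    obtain ⟨hsR, hM⟩ := hM
    refine ⟨hsR, ?_⟩
    rintro ⟨h, hsh, hR', hQ, hbd⟩
    obtain ⟨Q'', hsub, hne, hadm⟩ := exists_adm_subset ζ pref u hu (R i ∩ Sh i h)
      (OppSet R i ∩ Th i h) s ⟨hsR, hsh⟩ (hM h hsh hR' hQ)
    exact hbd Q'' hsub hne hadm


end OrdinalGames

end ICBD
end
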